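/- arXiv:2603.05100 — 6 statements merged into one kernel-verified Lean document; each statement's English description precedes it below -/
import Mathlib

section
/- Let G₁ and G₂ be vertex-disjoint graphs and let G = G₁ * G₂ be their join. Then for every u ∈ V(G₁) and v ∈ V(G₂), the maximum number of pairwise internally vertex-disjoint u–v paths in G equals min{d_G(u), d_G(v)}. -/
open SimpleGraph
open scoped ENNReal NNReal

/-- The number of connected components of a graph. -/
noncomputable def componentCount {V : Type*} (G : SimpleGraph V) : ℕ :=
  Nat.card G.ConnectedComponent

/-- `S` is a separator of `G` if `G - S` has at least two connected components. -/
def SimpleGraph.IsSeparator {V : Type*} (G : SimpleGraph V) (S : Finset V) : Prop :=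
  2 ≤ componentCount (G.induce ((↑S : Set V)ᶜ))

/-- The toughness of a graph, as an extended nonnegative real:
the infimum over all separators `S` of `|S| / c(G - S)`; `∞` if there is no separator. -/
noncomputable def SimpleGraph.toughness {V : Type*} (G : SimpleGraph V) : ℝ≥0∞ :=
  ⨅ (S : Finset V) (_ : G.IsSeparator S),
    (S.card : ℝ≥0∞) / (componentCount (G.induce ((↑S : Set V)ᶜ)) : ℝ≥0∞)

/-- A graph is minimally tough if deleting any edge strictly decreases the toughness. -/
def SimpleGraph.MinimallyTough {V : Type*} (G : SimpleGraph V) : Prop :=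
  ∀ e ∈ G.edgeSet, (G.deleteEdges {e}).toughness < G.toughness

/-- The degree of a vertex (as the cardinality of its neighbourhood). -/
noncomputable def SimpleGraph.deg {V : Type*} (G : SimpleGraph V) (v : V) : ℕ :=
  (G.neighborSet v).ncard

/-- A graph is `d`-regular if every vertex has degree `d`. -/
def SimpleGraph.RegularOfDegree {V : Type*} (G : SimpleGraph V) (d : ℕ) : Prop :=
  ∀ v, G.deg v = d

/-- Two `u`-`v` walks are internally disjoint if `u` and `v` are their only common vertices. -/
def SimpleGraph.InternallyDisjoint {V : Type*} {G : SimpleGraph V} {u v : V}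
    (p q : G.Walk u v) : Prop :=
  ∀ w, w ∈ p.support → w ∈ q.support → w = u ∨ w = v

/-- The local connectivity `κ_G(u,v)`: the maximum number of pairwise internally
vertex-disjoint `u`-`v` paths in `G`. -/
noncomputable def SimpleGraph.localConnectivity {V : Type*} (G : SimpleGraph V) (u v : V) : ℕ :=
  sSup {n | ∃ P : Set (G.Path u v), P.ncard = n ∧
    P.Pairwise fun p q => SimpleGraph.InternallyDisjoint (p : G.Walk u v) (q : G.Walk u v)}

/-- A graph is `k`-connected if it has more than `k` vertices and removing fewer than `k`
vertices leaves it connected. -/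
def SimpleGraph.IsKConnected {V : Type*} (G : SimpleGraph V) (k : ℕ) : Prop :=
  k < Nat.card V ∧ ∀ S : Finset V, S.card < k → (G.induce ((↑S : Set V)ᶜ)).Connected

/-- The connectivity `κ(G)` of a graph: the largest `k` such that `G` is `k`-connected. -/
noncomputable def SimpleGraph.connectivity {V : Type*} (G : SimpleGraph V) : ℕ :=
  sSup {k | G.IsKConnected k}

/-- The maximum size of a matching in `G`. -/
noncomputable def SimpleGraph.maxMatching {V : Type*} (G : SimpleGraph V) : ℕ :=
  sSup {n | ∃ M : G.Subgraph, M.IsMatching ∧ M.edgeSet.ncard = n}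

/-- A walk has a chord if some edge of `G` joins two of its vertices but is not an
edge of the walk. -/
def SimpleGraph.Walk.HasChord {V : Type*} {G : SimpleGraph V} {v : V} (c : G.Walk v v) : Prop :=
  ∃ x y, x ∈ c.support ∧ y ∈ c.support ∧ G.Adj x y ∧ s(x, y) ∉ c.edges

/-- A graph is chordal if every cycle of length at least 4 has a chord. -/
def SimpleGraph.IsChordal {V : Type*} (G : SimpleGraph V) : Prop :=
  ∀ (v : V) (c : G.Walk v v), c.IsCycle → 4 ≤ c.length → c.HasChord

/-- A vertex is universal if it is adjacent to all other vertices. -/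
def SimpleGraph.IsUniversal' {V : Type*} (G : SimpleGraph V) (v : V) : Prop :=
  ∀ w, w ≠ v → G.Adj v w

/-!
Internally disjoint `u`–`v` paths leave `u` through distinct neighbours (the edge `uv` is the
only such path whose second vertex is `v`), so `κ(u,v) ≤ d(u)`, and by reversing paths
`κ(u,v) ≤ d(v)`. Conversely, if `u ~ v` then `N(u)` splits into `v`, the common neighbours
of `u` and `v`, and the private neighbours `N(u) \ N[v]`. The edge `uv`, the paths `u x v`
through common neighbours `x`, and the paths `u y σ(y) v` along a matching `σ` from private
neighbours of `u` to private neighbours of `v` are internally disjoint. In the join with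
`u ∈ A`, `v ∈ B`, the private neighbours of `u` lie in `B` and those of `v` in `A`, so they are
completely joined; a matching saturating the smaller side yields
`1 + |N(u) ∩ N(v)| + min (|N(u) \ N[v]|, |N(v) \ N[u]|) = min (d(u), d(v))` paths.
-/

namespace SimpleGraph

variable {V : Type*} {G : SimpleGraph V} {u v : V}

lemma Walk.IsPath.support_eq_pair_of_snd_eq {p : G.Walk u v} (hp : p.IsPath) (hne : u ≠ v)
    (hsnd : p.snd = v) : p.support = [u, v] := by
  cases p with
  | nil => exact absurd rfl hne
  | cons hadj q =>
    simp only [Walk.snd, Walk.getVert_cons_succ, Walk.getVert_zero] at hsnd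
    subst hsnd
    rw [Walk.eq_nil_iff_nil.mpr (Walk.isPath_iff_nil.mp hp.of_cons)]
    rfl

lemma ncard_le_deg_of_pairwise_internallyDisjoint [Finite V] (hne : u ≠ v)
    {P : Set (G.Path u v)} (hP : P.Pairwise fun p q => InternallyDisjoint (p : G.Walk u v) q) :
    P.ncard ≤ G.deg u := by
  have hsnd_adj (p : G.Path u v) : G.Adj u (p : G.Walk u v).snd :=
    Walk.adj_snd (Walk.not_nil_of_ne hne)
  refine Set.ncard_le_ncard_of_injOn (fun p : G.Path u v => (p : G.Walk u v).snd)
    (fun p _ => hsnd_adj p) ?_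
  intro p hp q hq (hsnd : (p : G.Walk u v).snd = (q : G.Walk u v).snd)
  by_contra hpq
  have hsnd_mem : (p : G.Walk u v).snd ∈ (q : G.Walk u v).support :=
    hsnd ▸ Walk.getVert_mem_support _ 1
  rcases hP hp hq hpq _ (Walk.getVert_mem_support _ 1) hsnd_mem with hu | hv
  · exact (hsnd_adj p).ne' hu
  · refine hpq (Subtype.ext (Walk.ext_support ?_))
    rw [p.2.support_eq_pair_of_snd_eq hne hv, q.2.support_eq_pair_of_snd_eq hne (hsnd ▸ hv)]

lemma pairwise_internallyDisjoint_image_reverse {P : Set (G.Path u v)}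
    (hP : P.Pairwise fun p q => InternallyDisjoint (p : G.Walk u v) q) :
    (Path.reverse '' P).Pairwise fun p q => InternallyDisjoint (p : G.Walk v u) q := by
  rintro _ ⟨p, hp, rfl⟩ _ ⟨q, hq, rfl⟩ hne w hwp hwq
  have hpq : p ≠ q := by rintro rfl; exact hne rfl
  simp only [Path.reverse_coe, Walk.support_reverse, List.mem_reverse] at hwp hwq
  exact (hP hp hq hpq w hwp hwq).symm

lemma ncard_image_reverse (P : Set (G.Path u v)) : (Path.reverse '' P).ncard = P.ncard :=
  Set.ncard_image_of_injective _ fun _ _ h =>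
    Subtype.ext (Walk.reverse_injective (congrArg Subtype.val h))

lemma internallyDisjoint_of_support_eq {p q : G.Walk u v} {s t : List V}
    (hp : p.support = u :: s ++ [v]) (hq : q.support = u :: t ++ [v]) (hst : s.Disjoint t) :
    InternallyDisjoint p q := by
  intro w hwp hwq
  simp only [hp, hq, List.cons_append, List.mem_cons, List.mem_append] at hwp hwq
  grind [List.Disjoint]

lemma exists_pairwise_internallyDisjoint_of_support {ι : Type*} [Finite ι]
    (f : ι → G.Path u v) (mid : ι → List V)
    (hsupp : ∀ i, (f i : G.Walk u v).support = u :: mid i ++ [v])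
    (hmid : Pairwise fun i j => (mid i).Disjoint (mid j))
    (hnil : ∀ i j, mid i = [] → mid j = [] → i = j) :
    ∃ P : Set (G.Path u v), P.ncard = Nat.card ι ∧
      P.Pairwise fun p q => InternallyDisjoint (p : G.Walk u v) q := by
  have hinj : Function.Injective f := by
    intro i j hij
    have hmij : mid i = mid j := by
      simpa [hsupp] using congrArg (fun p : G.Path u v => (p : G.Walk u v).support) hij
    by_contra hne
    have hi : mid i = [] :=
      List.eq_nil_iff_forall_not_mem.mpr fun w hw => hmid hne hw (hmij ▸ hw)
    exact hne (hnil i j hi (hmij ▸ hi))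
  refine ⟨Set.range f, Set.ncard_range_of_injective hinj, Pairwise.range_pairwise ?_⟩
  exact fun i j hij => internallyDisjoint_of_support_eq (hsupp i) (hsupp j) (hmid hij)

def privateNeighborSet (G : SimpleGraph V) (u v : V) : Set V :=
  G.neighborSet u \ insert v (G.neighborSet v)

@[simp]
lemma mem_privateNeighborSet {w : V} :
    w ∈ G.privateNeighborSet u v ↔ G.Adj u w ∧ w ≠ v ∧ ¬G.Adj v w := by
  simp [privateNeighborSet]

lemma exists_pairwise_internallyDisjoint_of_matching [Finite V] (huv : G.Adj u v) {Y : Set V}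
    (hY : Y ⊆ G.privateNeighborSet u v) {σ : V → V}
    (hσ : Set.MapsTo σ Y (G.privateNeighborSet v u)) (hσinj : Set.InjOn σ Y)
    (hσadj : ∀ y ∈ Y, G.Adj y (σ y)) :
    ∃ P : Set (G.Path u v), P.ncard = 1 + (G.commonNeighbors u v).ncard + Y.ncard ∧
      P.Pairwise fun p q => InternallyDisjoint (p : G.Walk u v) q := by
  have hY' (y : Y) := mem_privateNeighborSet.mp (hY y.2)
  have hσ' (y : Y) := mem_privateNeighborSet.mp (hσ y.2)
  have hx' (x : G.commonNeighbors u v) := G.mem_commonNeighbors.mp x.2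
  let f : Option (G.commonNeighbors u v ⊕ Y) → G.Path u v
    | none => Path.singleton huv
    | some (.inl x) => ⟨.cons (hx' x).1 (.cons (hx' x).2.symm .nil), by
        simp [huv.ne, (hx' x).1.ne, (hx' x).2.ne']⟩
    | some (.inr y) => ⟨.cons (hY' y).1 (.cons (hσadj y y.2) (.cons (hσ' y).1.symm .nil)), by
        simp [huv.ne, (hY' y).1.ne, (hY' y).2.1, (hσ' y).2.1.symm, (hσadj y y.2).ne,
          (hσ' y).1.ne']⟩
  let mid : Option (G.commonNeighbors u v ⊕ Y) → List V
    | none => []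
    | some (.inl x) => [x]
    | some (.inr y) => [y, σ y]
  have hxy (x : G.commonNeighbors u v) (y : Y) : (x : V) ≠ y :=
    fun h => (hY' y).2.2 (h ▸ (hx' x).2)
  have hxσ (x : G.commonNeighbors u v) (y : Y) : (x : V) ≠ σ y :=
    fun h => (hσ' y).2.2 (h ▸ (hx' x).1)
  have hyσ (y y' : Y) : (y : V) ≠ σ y' :=
    fun h => (hσ' y').2.2 (h ▸ (hY' y).1)
  have hσeq (y y' : Y) : σ y = σ y' ↔ y = y' := (hσinj.eq_iff y.2 y'.2).trans Subtype.val_inj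
  have hmid : Pairwise fun i j => (mid i).Disjoint (mid j) := by
    rintro (_ | x | y) (_ | x' | y') hne <;>
      simp [mid, hxy, hxσ, hyσ, (hyσ _ _).symm, hσeq, Subtype.val_inj] at hne ⊢
    all_goals exact Ne.symm hne
  obtain ⟨P, hcard, hP⟩ := exists_pairwise_internallyDisjoint_of_support f mid
    (by rintro (_ | _ | _) <;> rfl) hmid (by rintro (_ | _ | _) (_ | _ | _) <;> simp [mid])
  refine ⟨P, ?_, hP⟩
  rw [hcard, Finite.card_option, Nat.card_sum, Nat.card_coe_set_eq, Nat.card_coe_set_eq]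
  ring

lemma deg_eq_one_add_commonNeighbors_add_privateNeighborSet [Finite V] (huv : G.Adj u v) :
    G.deg u = 1 + (G.commonNeighbors u v).ncard + (G.privateNeighborSet u v).ncard := by
  have hsplit : G.neighborSet u =
      insert v (G.commonNeighbors u v ∪ G.privateNeighborSet u v) := by
    ext w
    by_cases hw : w = v
    · simp [hw, huv]
    · simp only [mem_neighborSet, Set.mem_insert_iff, hw, Set.mem_union, mem_commonNeighbors,
        mem_privateNeighborSet, ne_eq, not_false_eq_true, true_and, false_or]
      tauto
  have hv : v ∉ G.commonNeighbors u v ∪ G.privateNeighborSet u v := by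
    simp [mem_commonNeighbors]
  have hdisj : Disjoint (G.commonNeighbors u v) (G.privateNeighborSet u v) :=
    Set.disjoint_left.mpr fun _ hc hp =>
      (mem_privateNeighborSet.mp hp).2.2 (G.mem_commonNeighbors.mp hc).2
  rw [deg, hsplit, Set.ncard_insert_of_notMem hv, Set.ncard_union_eq hdisj]
  ring

lemma localConnectivity_eq_of_forall_le {n : ℕ}
    (hex : ∃ P : Set (G.Path u v), P.ncard = n ∧
      P.Pairwise fun p q => InternallyDisjoint (p : G.Walk u v) q)
    (hle : ∀ P : Set (G.Path u v),
      (P.Pairwise fun p q => InternallyDisjoint (p : G.Walk u v) q) → P.ncard ≤ n) :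
    G.localConnectivity u v = n :=
  IsGreatest.csSup_eq ⟨hex, by rintro _ ⟨P, rfl, hP⟩; exact hle P hP⟩

theorem localConnectivity_eq_min_deg [Finite V] (huv : G.Adj u v)
    (hcomplete : ∀ y ∈ G.privateNeighborSet u v, ∀ z ∈ G.privateNeighborSet v u,
      G.Adj y z) :
    G.localConnectivity u v = min (G.deg u) (G.deg v) := by
  refine localConnectivity_eq_of_forall_le ?_ fun P hP => le_min ?_ ?_
  · obtain ⟨Y, hYsub, hYcard⟩ := Set.exists_subset_card_eq (min_le_left
      (G.privateNeighborSet u v).ncard (G.privateNeighborSet v u).ncard)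
    have hle : Y.encard ≤ (G.privateNeighborSet v u).encard := by
      rw [← Y.toFinite.cast_ncard_eq, ← (Set.toFinite _).cast_ncard_eq, hYcard]
      exact_mod_cast min_le_right _ _
    have : Nonempty V := ⟨u⟩
    obtain ⟨σ, hσ, hσinj⟩ := Y.toFinite.exists_injOn_of_encard_le hle
    obtain ⟨P, hcard, hP⟩ := exists_pairwise_internallyDisjoint_of_matching huv hYsub hσ hσinj
      fun y hy => hcomplete y (hYsub hy) (σ y) (hσ hy)
    refine ⟨P, ?_, hP⟩
    rw [hcard, hYcard, deg_eq_one_add_commonNeighbors_add_privateNeighborSet huv,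
      deg_eq_one_add_commonNeighbors_add_privateNeighborSet huv.symm, commonNeighbors_symm]
    omega
  · exact ncard_le_deg_of_pairwise_internallyDisjoint huv.ne hP
  · rw [← ncard_image_reverse]
    exact ncard_le_deg_of_pairwise_internallyDisjoint huv.ne'
      (pairwise_internallyDisjoint_image_reverse hP)

end SimpleGraph

theorem stmt_2_general {V : Type*} [Fintype V] [DecidableEq V] (G : SimpleGraph V) (A B : Finset V)
    (hcover : A ∪ B = Finset.univ)
    (hjoin : ∀ a ∈ A, ∀ b ∈ B, G.Adj a b)
    (u v : V) (hu : u ∈ A) (hv : v ∈ B) :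
    G.localConnectivity u v = min (G.deg u) (G.deg v) := by
  have hmem (w : V) : w ∈ A ∨ w ∈ B := Finset.mem_union.mp (hcover ▸ Finset.mem_univ w)
  refine G.localConnectivity_eq_min_deg (hjoin u hu v hv) fun y hy z hz => ?_
  rw [G.mem_privateNeighborSet] at hy hz
  have hyB : y ∈ B := (hmem y).resolve_left fun hyA => hy.2.2 (hjoin y hyA v hv).symm
  have hzA : z ∈ A := (hmem z).resolve_right fun hzB => hz.2.2 (hjoin u hu z hzB)
  exact (hjoin z hzA y hyB).symm

/-- If `G` is the join of two vertex-disjoint graphs (with vertex sets `A` and `B`),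
then for every `u ∈ A` and `v ∈ B`, the local connectivity `κ_G(u,v)` equals
`min {d_G(u), d_G(v)}`. -/
theorem stmt_2 {V : Type*} [Fintype V] [DecidableEq V] (G : SimpleGraph V) (A B : Finset V)
    (hdisj : Disjoint A B) (hcover : A ∪ B = Finset.univ)
    (hjoin : ∀ a ∈ A, ∀ b ∈ B, G.Adj a b)
    (u v : V) (hu : u ∈ A) (hv : v ∈ B) :
    G.localConnectivity u v = min (G.deg u) (G.deg v) :=
  stmt_2_general G A B hcover hjoin u v hu hv
end

section
/- If e = uv is a dominating edge in a graph G, then no separator of G is a u–v separator in G − e. -/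
open SimpleGraph
open scoped ENNReal NNReal

/-- A vertex is universal if it is adjacent to all other vertices. -/
def SimpleGraph.IsUniversalVertex {V : Type*} (G : SimpleGraph V) (v : V) : Prop :=
  ∀ w, w ≠ v → G.Adj v w

/-- `S` is a `u`-`v` separator of `H` if `S` avoids `u` and `v` and every `u`-`v` walk
in `H` meets `S`. -/
def IsUVSeparator {V : Type*} (H : SimpleGraph V) (u v : V) (S : Finset V) : Prop :=
  u ∉ S ∧ v ∉ S ∧ ∀ p : H.Walk u v, ∃ w ∈ p.support, w ∈ S

namespace SimpleGraph

variable {V : Type*} {G : SimpleGraph V}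

theorem Connected.componentCount_eq_one (h : G.Connected) : componentCount G = 1 := by
  have := h.preconnected.subsingleton_connectedComponent
  have : Nonempty G.ConnectedComponent := h.nonempty.map G.connectedComponentMk
  exact Nat.card_eq_one_iff_unique.2 ⟨inferInstance, inferInstance⟩

theorem not_isSeparator_of_connected_induce {S : Finset V}
    (h : (G.induce ((↑S : Set V)ᶜ)).Connected) : ¬ G.IsSeparator S := by
  rw [IsSeparator, h.componentCount_eq_one]
  omega

theorem Adj.connected_induce_of_subset_neighborSet_union {u v : V} {s : Set V}
    (huv : G.Adj u v) (hu : u ∈ s) (hv : v ∈ s) (hs : s ⊆ G.neighborSet u ∪ G.neighborSet v) :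
    (G.induce s).Connected := by
  have huv' : (G.induce s).Adj ⟨u, hu⟩ ⟨v, hv⟩ := huv
  refine (connected_iff_exists_forall_reachable _).2 ⟨⟨u, hu⟩, fun ⟨w, hw⟩ => ?_⟩
  rcases hs hw with hwu | hwv
  · exact Adj.reachable (G := G.induce s) hwu
  · exact huv'.reachable.trans (Adj.reachable (G := G.induce s) hwv)

end SimpleGraph

theorem stmt_6_general {V : Type*} (G : SimpleGraph V) (u v : V) (huv : G.Adj u v)
    (hdom : G.neighborSet u ∪ G.neighborSet v = Set.univ) :
    ∀ S : Finset V, G.IsSeparator S → ¬ IsUVSeparator (G.deleteEdges {s(u, v)}) u v S := by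
  rintro S hsep ⟨hu, hv, -⟩
  refine not_isSeparator_of_connected_induce ?_ hsep
  exact huv.connected_induce_of_subset_neighborSet_union hu hv (hdom ▸ Set.subset_univ _)

/-- If `e = uv` is a dominating edge in `G`, then no separator of `G` is a `u`-`v`
separator in `G − e`. -/
theorem stmt_6 {V : Type*} [Fintype V] (G : SimpleGraph V) (u v : V) (huv : G.Adj u v)
    (hdom : G.neighborSet u ∪ G.neighborSet v = Set.univ) :
    ∀ S : Finset V, G.IsSeparator S → ¬ IsUVSeparator (G.deleteEdges {s(u, v)}) u v S :=
  stmt_6_general G u v huv hdom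
end

section
/- Every non-complete minimally tough graph has at most one universal vertex. -/
open SimpleGraph
open scoped ENNReal NNReal

/-- A vertex is universal if it is adjacent to all other vertices. -/
def SimpleGraph.IsUniversalVtx {V : Type*} (G : SimpleGraph V) (v : V) : Prop :=
  ∀ w, w ≠ v → G.Adj v w


/-!
If `v ≠ w` are both universal, deleting the edge `vw` cannot lower the toughness. A separator `S`
of `G - vw` containing `v` or `w` separates `G` in exactly the same way. Otherwise any third vertex
outside `S` is adjacent to both `v` and `w` in `G - vw`, which would make `G - vw - S` connected;
so `S` misses only `v` and `w`, and its ratio `|S| / c` is at least `(n - 2) / 2`. Since `G` is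
not complete, the complement of a non-adjacent pair is a separator of `G` with ratio at most
`(n - 2) / 2`. This contradicts minimal toughness.
-/

open Finset

lemma componentCount_le_card {α : Type*} [Finite α] (H : SimpleGraph α) :
    componentCount H ≤ Nat.card α :=
  Nat.card_le_card_of_surjective H.connectedComponentMk Quot.exists_rep

namespace SimpleGraph

variable {V : Type*}

lemma IsSeparator.not_preconnected {G : SimpleGraph V} {S : Finset V} (hS : G.IsSeparator S) :
    ¬ (G.induce (↑S : Set V)ᶜ).Preconnected := by
  intro hconn
  have := hconn.subsingleton_connectedComponent
  have : componentCount (G.induce (↑S : Set V)ᶜ) ≤ 1 := Finite.card_le_one_iff_subsingleton.mpr this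
  exact absurd (le_trans (α := ℕ) hS this) (by norm_num)

lemma toughness_le_card_div_two {G : SimpleGraph V} {S : Finset V} (hS : G.IsSeparator S) :
    G.toughness ≤ S.card / 2 :=
  (iInf₂_le S hS).trans (ENNReal.div_le_div_left (by exact_mod_cast hS) _)

lemma isSeparator_compl_pair [Fintype V] [DecidableEq V] {G : SimpleGraph V} {x y : V}
    (hxy : x ≠ y) (hnadj : ¬ G.Adj x y) : G.IsSeparator ({x, y}ᶜ : Finset V) := by
  let H := G.induce (↑({x, y}ᶜ : Finset V) : Set V)ᶜ
  have hx : x ∈ (↑({x, y}ᶜ : Finset V) : Set V)ᶜ := by simp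
  have hy : y ∈ (↑({x, y}ᶜ : Finset V) : Set V)ᶜ := by simp
  have hnreach : ¬ H.Reachable ⟨x, hx⟩ ⟨y, hy⟩ := by
    rintro ⟨_ | @⟨_, ⟨z, hz⟩, _, hadj, -⟩⟩
    · exact hxy rfl
    · simp only [coe_compl, coe_insert, coe_singleton, compl_compl, Set.mem_insert_iff,
        Set.mem_singleton_iff] at hz
      rcases hz with rfl | rfl
      · exact hadj.ne rfl
      · exact hnadj hadj
  exact Finite.one_lt_card_iff_nontrivial.mpr
    ⟨_, _, fun h => hnreach (ConnectedComponent.exact h)⟩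

lemma toughness_le_of_not_adj [Fintype V] {G : SimpleGraph V} {x y : V} (hxy : x ≠ y)
    (hnadj : ¬ G.Adj x y) : G.toughness ≤ ((Fintype.card V - 2 : ℕ) : ℝ≥0∞) / 2 := by
  classical
  refine (toughness_le_card_div_two (isSeparator_compl_pair hxy hnadj)).trans_eq ?_
  rw [card_compl, card_pair hxy]

lemma card_sub_two_div_two_le [Fintype V] [DecidableEq V] (G : SimpleGraph V) {S : Finset V}
    (hS : Sᶜ.card ≤ 2) :
    ((Fintype.card V - 2 : ℕ) : ℝ≥0∞) / 2 ≤ S.card / componentCount (G.induce (↑S : Set V)ᶜ) := by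
  have hc : componentCount (G.induce (↑S : Set V)ᶜ) ≤ 2 := by
    refine (componentCount_le_card _).trans ?_
    rwa [← coe_compl, Nat.card_coe_set_eq, Set.ncard_coe_finset]
  have hcard : Fintype.card V - 2 ≤ S.card := by
    have := card_add_card_compl S
    omega
  exact ENNReal.div_le_div (by exact_mod_cast hcard) (by exact_mod_cast hc)

lemma induce_deleteEdges_of_notMem (G : SimpleGraph V) {v w : V} {s : Set V} (hv : v ∉ s) :
    (G.deleteEdges {s(v, w)}).induce s = G.induce s := by
  ext a b
  simp only [comap_adj, Function.Embedding.coe_subtype, deleteEdges_adj, Set.mem_singleton_iff,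
    and_iff_left_iff_imp]
  rintro - h
  rcases Sym2.eq_iff.mp h with ⟨ha, -⟩ | ⟨-, hb⟩
  · exact hv (ha ▸ a.2)
  · exact hv (hb ▸ b.2)

lemma preconnected_induce_deleteEdges_of_isUniversalVtx {G : SimpleGraph V} {v w u : V}
    {s : Set V} (hv : G.IsUniversalVtx v) (hw : G.IsUniversalVtx w) (hws : w ∈ s) (hus : u ∈ s)
    (huv : u ≠ v) (huw : u ≠ w) : ((G.deleteEdges {s(v, w)}).induce s).Preconnected := by
  set H := (G.deleteEdges {s(v, w)}).induce s
  have hadj : ∀ a b : s, G.Adj a b → (a : V) ≠ v → (a : V) ≠ w → H.Adj a b := by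
    intro a b h hav haw
    simp only [H, comap_adj, Function.Embedding.coe_subtype, deleteEdges_adj,
      Set.mem_singleton_iff, Sym2.eq_iff]
    tauto
  have hu_w : H.Adj ⟨u, hus⟩ ⟨w, hws⟩ := hadj _ _ (hw u huw).symm huv huw
  have reach_w : ∀ a : s, H.Reachable a ⟨w, hws⟩ := by
    rintro ⟨a, has⟩
    by_cases haw : a = w
    · subst haw; rfl
    by_cases hav : a = v
    · subst hav
      exact (hadj ⟨u, hus⟩ ⟨a, has⟩ (hv u huv).symm huv huw).symm.reachable.trans hu_w.reachable
    · exact (hadj _ _ (hw a haw).symm hav haw).reachable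
  exact fun a b => (reach_w a).trans (reach_w b).symm

theorem toughness_le_toughness_deleteEdges_of_isUniversalVtx [Fintype V] {G : SimpleGraph V}
    (hnc : G ≠ ⊤) {v w : V} (hv : G.IsUniversalVtx v) (hw : G.IsUniversalVtx w) :
    G.toughness ≤ (G.deleteEdges {s(v, w)}).toughness := by
  classical
  obtain ⟨x, y, hxy, hnadj⟩ := ne_top_iff_exists_not_adj.mp hnc
  refine le_iInf₂ fun S hS => ?_
  by_cases hvwS : v ∈ S ∨ w ∈ S
  · have heq : (G.deleteEdges {s(v, w)}).induce (↑S : Set V)ᶜ = G.induce (↑S : Set V)ᶜ := by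
      rcases hvwS with hvS | hwS
      · exact G.induce_deleteEdges_of_notMem (by simpa)
      · rw [Sym2.eq_swap]; exact G.induce_deleteEdges_of_notMem (by simpa)
    rw [IsSeparator, heq] at hS
    rw [heq]
    exact iInf₂_le S hS
  · rw [not_or] at hvwS
    have hsub : Sᶜ ⊆ {v, w} := by
      intro u hu
      by_contra hu'
      simp only [mem_insert, mem_singleton, not_or] at hu'
      exact hS.not_preconnected (preconnected_induce_deleteEdges_of_isUniversalVtx hv hw
        (by simpa using hvwS.2) (by simpa using hu) hu'.1 hu'.2)
    calc G.toughness ≤ ((Fintype.card V - 2 : ℕ) : ℝ≥0∞) / 2 := toughness_le_of_not_adj hxy hnadj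
      _ ≤ _ := card_sub_two_div_two_le _ ((card_le_card hsub).trans card_le_two)

end SimpleGraph

/-- Every non-complete minimally tough graph has at most one universal vertex. -/
theorem stmt_7 {V : Type*} [Fintype V] (G : SimpleGraph V) (hnc : G ≠ ⊤)
    (hmin : G.MinimallyTough) (v w : V) (hv : G.IsUniversalVtx v) (hw : G.IsUniversalVtx w) :
    v = w := by
  by_contra hvw
  exact (hmin _ (hv w (Ne.symm hvw))).not_ge
    (toughness_le_toughness_deleteEdges_of_isUniversalVtx hnc hv hw)
end

section
/- Let n = n₁ + ⋯ + n_k with 1 ≤ n₁ ≤ ⋯ ≤ n_k and n_k > 1. Then the toughness of the complete multipartite graph K_{n₁,…,n_k} equals n/n_k − 1. -/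
open SimpleGraph
open scoped ENNReal NNReal

/-!
If the vertices surviving the deletion of `S` meet two different parts, they induce a connected
graph: two of them in different parts are adjacent, and two in the same part have a common
neighbour among the survivors. So a separator leaves an independent set of `m ≥ 2` vertices
inside a single part, `m` components, and the ratio `(n - m) / m = n / m - 1`. This is smallest
when `m = n_k`, which is attained by deleting every part except a largest one.
-/

section ComponentCount

variable {V : Type*}

lemma componentCount_bot : componentCount (⊥ : SimpleGraph V) = Nat.card V :=
  (Nat.card_eq_of_bijective _
    ⟨fun _ _ h => reachable_bot.mp (ConnectedComponent.eq.mp h), fun c => c.exists_rep⟩).symm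

lemma SimpleGraph.Connected.componentCount_eq_one_s10 {G : SimpleGraph V} (h : G.Connected) :
    componentCount G = 1 :=
  have := h.preconnected.subsingleton_connectedComponent
  have := h.nonempty.map G.connectedComponentMk
  Nat.card_eq_one_iff_unique.mpr ⟨inferInstance, inferInstance⟩

lemma componentCount_induce_compl_of_eq_bot [Fintype V] {G : SimpleGraph V} {S : Finset V}
    (h : G.induce (↑S : Set V)ᶜ = ⊥) :
    componentCount (G.induce (↑S : Set V)ᶜ) = Fintype.card V - S.card := by
  classical
  rw [h, componentCount_bot, ← Finset.coe_compl, Nat.card_coe_set_eq, Set.ncard_coe_finset,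
    Finset.card_compl]

end ComponentCount

lemma ENNReal.natCast_sub_div_self {N m : ℕ} (hm : m ≠ 0) :
    ((N - m : ℕ) : ℝ≥0∞) / m = N / m - 1 := by
  rw [ENNReal.natCast_sub, ENNReal.sub_div fun _ _ => by exact_mod_cast hm,
    ENNReal.div_self (by exact_mod_cast hm) (ENNReal.natCast_ne_top m)]

lemma SimpleGraph.IsSeparator.ratio_eq_of_induce_eq_bot {V : Type*} [Fintype V]
    {G : SimpleGraph V} {S : Finset V} (hS : G.IsSeparator S)
    (h : G.induce (↑S : Set V)ᶜ = ⊥) :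
    (S.card : ℝ≥0∞) / componentCount (G.induce (↑S : Set V)ᶜ) =
      Fintype.card V / (Fintype.card V - S.card : ℕ) - 1 := by
  have hcount := componentCount_induce_compl_of_eq_bot h
  have hpos : Fintype.card V - S.card ≠ 0 := by unfold IsSeparator at hS; omega
  rw [hcount, ← ENNReal.natCast_sub_div_self hpos,
    Nat.sub_sub_self (Finset.card_le_univ S)]

namespace completeMultipartiteGraph

variable {ι : Type*} {V : ι → Type*} {T : Set (Σ i, V i)}

lemma induce_eq_bot_of_forall_fst_eq {i : ι} (hT : ∀ x ∈ T, x.1 = i) :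
    (completeMultipartiteGraph V).induce T = ⊥ := by
  ext ⟨x, hx⟩ ⟨y, hy⟩
  simp [completeMultipartiteGraph, hT x hx, hT y hy]

lemma induce_connected_of_fst_ne {x y : Σ i, V i} (hx : x ∈ T) (hy : y ∈ T)
    (hxy : x.1 ≠ y.1) :
    ((completeMultipartiteGraph V).induce T).Connected := by
  have adj_iff (u v : T) :
      ((completeMultipartiteGraph V).induce T).Adj u v ↔ u.1.1 ≠ v.1.1 := by
    simp [completeMultipartiteGraph]
  have : Nonempty T := ⟨⟨x, hx⟩⟩
  refine ⟨fun u v => ?_⟩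
  by_cases huv : u.1.1 = v.1.1
  · obtain ⟨w, hwu⟩ : ∃ w : T, w.1.1 ≠ u.1.1 := by
      by_cases hxu : x.1 = u.1.1
      · exact ⟨⟨y, hy⟩, fun h => hxy (hxu.trans h.symm)⟩
      · exact ⟨⟨x, hx⟩, hxu⟩
    exact ((adj_iff u w).mpr (Ne.symm hwu)).reachable.trans
      ((adj_iff w v).mpr (huv ▸ hwu)).reachable
  · exact ((adj_iff u v).mpr huv).reachable

lemma exists_forall_fst_eq_of_isSeparator {S : Finset (Σ i, V i)}
    (hS : (completeMultipartiteGraph V).IsSeparator S) : ∃ i, ∀ x ∉ S, x.1 = i := by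
  obtain ⟨c⟩ :
      Nonempty ((completeMultipartiteGraph V).induce (↑S : Set _)ᶜ).ConnectedComponent :=
    (Nat.card_pos_iff.mp (zero_lt_two.trans_le hS)).1
  refine ⟨c.out.1.1, fun y hy => by_contra fun hne => ?_⟩
  have hconn := induce_connected_of_fst_ne c.out.2 (by simpa using hy) (Ne.symm hne)
  rw [IsSeparator, hconn.componentCount_eq_one_s10] at hS
  omega

end completeMultipartiteGraph

section Toughness

variable {ι : Type*} [Fintype ι] {V : ι → Type*} [∀ i, Fintype (V i)]

lemma Finset.card_filter_fst_eq [DecidableEq ι] (i : ι) :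
    (Finset.univ.filter fun x : Σ i, V i => x.1 = i).card = Fintype.card (V i) := by
  rw [← Fintype.card_subtype]
  exact Fintype.card_congr (Equiv.sigmaSubtype i)

open completeMultipartiteGraph in
theorem toughness_completeMultipartiteGraph {j : ι}
    (hmax : ∀ i, Fintype.card (V i) ≤ Fintype.card (V j)) (hj : 1 < Fintype.card (V j)) :
    (completeMultipartiteGraph V).toughness =
      Fintype.card (Σ i, V i) / Fintype.card (V j) - 1 := by
  classical
  apply le_antisymm
  · set S₀ : Finset (Σ i, V i) := Finset.univ.filter (·.1 ≠ j)
    have hbot := induce_eq_bot_of_forall_fst_eq (T := (S₀ : Set (Σ i, V i))ᶜ) (i := j)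
      (by simp [S₀])
    have hcard : Fintype.card (Σ i, V i) - S₀.card = Fintype.card (V j) := by
      rw [← Finset.card_compl, Finset.compl_filter]
      simpa using Finset.card_filter_fst_eq j
    have hsep : (completeMultipartiteGraph V).IsSeparator S₀ := by
      rwa [IsSeparator, componentCount_induce_compl_of_eq_bot hbot, hcard]
    calc _ ≤ _ := iInf₂_le S₀ hsep
      _ = _ := by rw [hsep.ratio_eq_of_induce_eq_bot hbot, hcard]
  · refine le_iInf₂ fun S hS => ?_
    obtain ⟨i, hi⟩ := exists_forall_fst_eq_of_isSeparator hS
    have hbot := induce_eq_bot_of_forall_fst_eq (T := (S : Set (Σ i, V i))ᶜ) (i := i)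
      (by simpa using hi)
    have hcard : Fintype.card (Σ i, V i) - S.card ≤ Fintype.card (V j) := by
      rw [← Finset.card_compl]
      calc Sᶜ.card ≤ (Finset.univ.filter fun x : Σ i, V i => x.1 = i).card :=
            Finset.card_le_card fun x hx => by simpa using hi x (by simpa using hx)
        _ = Fintype.card (V i) := Finset.card_filter_fst_eq i
        _ ≤ Fintype.card (V j) := hmax i
    rw [hS.ratio_eq_of_induce_eq_bot hbot]
    gcongr

end Toughness

theorem stmt_10_general (k : ℕ) (n : Fin (k + 1) → ℕ) (hmono : Monotone n)
    (hbig : 1 < n (Fin.last k)) :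
    (completeMultipartiteGraph fun i => Fin (n i)).toughness =
      ((∑ i, n i : ℕ) : ℝ≥0∞) / (n (Fin.last k) : ℝ≥0∞) - 1 := by
  have h := toughness_completeMultipartiteGraph (V := fun i => Fin (n i)) (j := Fin.last k)
    (by simpa using fun i => hmono (Fin.le_last i)) (by simpa using hbig)
  simpa [Fintype.card_sigma] using h

/-- The toughness of the complete multipartite graph with parts of sizes
`n 0 ≤ … ≤ n k`, where `n k > 1`, equals `n / n_k − 1` where `n` is the number of
vertices. -/
theorem stmt_10 (k : ℕ) (n : Fin (k + 1) → ℕ) (hmono : Monotone n) (h1 : 1 ≤ n 0)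
    (hbig : 1 < n (Fin.last k)) :
    (completeMultipartiteGraph fun i => Fin (n i)).toughness =
      ((∑ i, n i : ℕ) : ℝ≥0∞) / (n (Fin.last k) : ℝ≥0∞) - 1 :=
  stmt_10_general k n hmono hbig
end

section
/- For every real number t > 1, there is no minimally t-tough chordal graph with a universal vertex. -/
open SimpleGraph
open scoped ENNReal NNReal

/-!
Write `m = ⌈2t⌉` and pick non-adjacent vertices `u`, `r`. Every separator has at least `m`
vertices. Minimality at an edge `vw` at the universal vertex `v` gives a separator `S` of `G - vw`
with fewer than `2t` vertices; since `v` sees everything but `w`, `G - vw - S` consists of the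
components of `v` and `w`, so `N(w) - v ⊆ S` and `deg w ≤ m`. Hence every non-universal vertex has
degree exactly `m`, and `N(u)` is a minimum separator, which is a clique by chordality (Dirac).
Then each non-universal neighbour `c` of `u` has `N(c) = N[u] - c`, so the universal vertices
separate `u` from `r` and must be all of `N(u)`: there are `m ≥ 3` of them. Minimality at an edge
`w₁w₂` between two universal vertices now gives fewer than `m` vertices containing all vertices
but `w₁, w₂`, whereas `N(u) ∪ {u, r}` alone has `m + 2` vertices.
-/

namespace SimpleGraph

variable {V : Type*} {G : SimpleGraph V}

section Components

variable {α : Type*} (H : SimpleGraph α)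

theorem componentCount_le_card_of_forall_exists_reachable (s : Finset α)
    (h : ∀ a, ∃ b ∈ s, H.Reachable a b) : componentCount H ≤ s.card := by
  have hsurj : Function.Surjective fun b : s => H.connectedComponentMk b.1 := by
    intro c
    obtain ⟨a, rfl⟩ := c.exists_rep
    obtain ⟨b, hb, hab⟩ := h a
    exact ⟨⟨b, hb⟩, ConnectedComponent.sound hab.symm⟩
  simpa [componentCount] using Nat.card_le_card_of_surjective _ hsurj

theorem card_le_componentCount_of_pairwise_not_reachable [Finite α] (s : Finset α)
    (h : (s : Set α).Pairwise fun a b => ¬ H.Reachable a b) : s.card ≤ componentCount H := by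
  have hinj : Function.Injective fun b : s => H.connectedComponentMk b.1 := by
    intro a b hab
    by_contra hne
    exact h a.2 b.2 (Subtype.coe_ne_coe.mpr hne) (ConnectedComponent.exact hab)
  simpa [componentCount] using Nat.card_le_card_of_injective _ hinj

end Components

theorem not_reachable_induce_of_closed {S X : Set V}
    (hX : ∀ c ∈ X, c ∉ S → ∀ z, G.Adj c z → z ∉ S → z ∈ X) {x y : ↥Sᶜ}
    (hx : x.1 ∈ X) (hy : y.1 ∉ X) : ¬ (G.induce Sᶜ).Reachable x y := by
  rintro ⟨p⟩
  induction p with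
  | nil => exact hy hx
  | @cons a b _ hab _ ih => exact ih (hX a hx a.2 b hab b.2) hy

theorem isSeparator_of_closed [Finite V] {S : Finset V} {X : Set V}
    (hX : ∀ c ∈ X, c ∉ S → ∀ z, G.Adj c z → z ∉ S → z ∈ X) {x y : V}
    (hxS : x ∉ S) (hyS : y ∉ S) (hx : x ∈ X) (hy : y ∉ X) : G.IsSeparator S := by
  classical
  have hxy : x ≠ y := by rintro rfl; exact hy hx
  refine le_trans ?_ (card_le_componentCount_of_pairwise_not_reachable _
    {(⟨x, hxS⟩ : ↥(↑S : Set V)ᶜ), ⟨y, hyS⟩} ?_)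
  · rw [Finset.card_pair (by simpa using hxy)]
  · rw [Finset.coe_pair, Set.pairwise_pair]
    exact fun _ => ⟨not_reachable_induce_of_closed hX hx hy,
      fun h => not_reachable_induce_of_closed hX hx hy h.symm⟩

theorem isSeparator_neighborFinset [Fintype V] [DecidableRel G.Adj] {w ρ : V} (hwρ : w ≠ ρ)
    (hadj : ¬ G.Adj w ρ) : G.IsSeparator (G.neighborFinset w) := by
  refine isSeparator_of_closed (X := {w}) ?_ (by simp) (by simpa using hadj) rfl hwρ.symm
  rintro c rfl - z hz hzS
  exact absurd (by simpa using hz) hzS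

theorem toughness_mul_componentCount_le {S : Finset V} (hS : G.IsSeparator S) :
    G.toughness * componentCount (G.induce (↑S : Set V)ᶜ) ≤ S.card := by
  have hc : (componentCount (G.induce (↑S : Set V)ᶜ) : ℝ≥0∞) ≠ 0 := by
    have : 2 ≤ componentCount (G.induce (↑S : Set V)ᶜ) := hS
    exact_mod_cast (by omega : componentCount (G.induce (↑S : Set V)ᶜ) ≠ 0)
  rw [← ENNReal.le_div_iff_mul_le (Or.inl hc) (Or.inl (ENNReal.natCast_ne_top _))]
  exact iInf₂_le S hS

theorem exists_isSeparator_card_lt_of_toughness_lt {b : ℝ≥0∞} (h : G.toughness < b) :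
    ∃ S : Finset V, G.IsSeparator S ∧
      (S.card : ℝ≥0∞) < b * componentCount (G.induce (↑S : Set V)ᶜ) := by
  simp only [toughness, iInf_lt_iff] at h
  obtain ⟨S, hS, hlt⟩ := h
  refine ⟨S, hS, ?_⟩
  rwa [ENNReal.div_lt_iff (Or.inl ?_) (Or.inl (ENNReal.natCast_ne_top _))] at hlt
  have : 2 ≤ componentCount (G.induce (↑S : Set V)ᶜ) := hS
  exact_mod_cast (by omega : componentCount (G.induce (↑S : Set V)ᶜ) ≠ 0)

theorem exists_ne_not_adj_of_toughness_ne_top [Finite V] (h : G.toughness ≠ ⊤) :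
    ∃ u r, u ≠ r ∧ ¬ G.Adj u r := by
  obtain ⟨S, hS⟩ : ∃ S, G.IsSeparator S := by
    by_contra! hno
    exact h (by simp [toughness, hno])
  obtain ⟨x, y, hxy⟩ : ∃ x y, ¬ (G.induce (↑S : Set V)ᶜ).Reachable x y := by
    by_contra! hall
    have : Subsingleton (G.induce (↑S : Set V)ᶜ).ConnectedComponent :=
      ⟨ConnectedComponent.ind₂ fun x y => ConnectedComponent.sound (hall x y)⟩
    have : componentCount (G.induce (↑S : Set V)ᶜ) ≤ 1 :=
      Finite.card_le_one_iff_subsingleton.mpr this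
    have : 2 ≤ componentCount (G.induce (↑S : Set V)ᶜ) := hS
    omega
  refine ⟨x, y, fun he => hxy (by rw [Subtype.ext he]), fun hadj => hxy ?_⟩
  exact Adj.reachable (G := G.induce (↑S : Set V)ᶜ) hadj

theorem induce_deleteEdges_eq_of_mem {S : Set V} {e : Sym2 V} {a : V} (ha : a ∈ e)
    (haS : a ∈ S) : (G.deleteEdges {e}).induce Sᶜ = G.induce Sᶜ := by
  ext b c
  simp only [comap_adj, Function.Embedding.subtype_apply, deleteEdges_adj,
    Set.mem_singleton_iff, and_iff_left_iff_imp]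
  rintro - rfl
  rcases Sym2.mem_iff.mp ha with rfl | rfl
  exacts [b.2 haS, c.2 haS]

theorem MinimallyTough.exists_isSeparator_deleteEdges (hmin : G.MinimallyTough) {e : Sym2 V}
    (he : e ∈ G.edgeSet) :
    ∃ S : Finset V, (G.deleteEdges {e}).IsSeparator S ∧
      (S.card : ℝ≥0∞) < G.toughness * componentCount ((G.deleteEdges {e}).induce (↑S : Set V)ᶜ) ∧
      ∀ a ∈ e, a ∉ S := by
  obtain ⟨S, hS, hcard⟩ := exists_isSeparator_card_lt_of_toughness_lt (hmin e he)
  refine ⟨S, hS, hcard, fun a ha haS => ?_⟩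
  rw [IsSeparator, induce_deleteEdges_eq_of_mem ha haS] at hS
  rw [induce_deleteEdges_eq_of_mem ha haS] at hcard
  exact (toughness_mul_componentCount_le hS).not_gt hcard

section Toughness

variable {t : ℝ≥0}

theorem ceil_two_mul_le_card (htough : G.toughness = t) {S : Finset V} (hS : G.IsSeparator S) :
    ⌈2 * t⌉₊ ≤ S.card := by
  have hle : t * componentCount (G.induce (↑S : Set V)ᶜ) ≤ (S.card : ℝ≥0) := by
    exact_mod_cast htough ▸ toughness_mul_componentCount_le hS
  have h2 : (2 : ℝ≥0) ≤ componentCount (G.induce (↑S : Set V)ᶜ) := by exact_mod_cast hS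
  rw [Nat.ceil_le, mul_comm]
  exact (mul_le_mul_right h2 t).trans hle

theorem MinimallyTough.exists_card_lt_ceil (hmin : G.MinimallyTough) (htough : G.toughness = t)
    {x y : V} (hx : G.IsUniversalVertex x) (hxy : x ≠ y) :
    ∃ S : Finset V, S.card < ⌈2 * t⌉₊ ∧ ∀ z, G.Adj y z → z ≠ x → z ∈ S := by
  classical
  obtain ⟨S, hS, hcard, hxyS⟩ :=
    hmin.exists_isSeparator_deleteEdges (G.mem_edgeSet.mpr (hx y hxy.symm))
  rw [htough] at hcard
  have hxS : x ∉ S := hxyS x (Sym2.mem_mk_left x y)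
  have hyS : y ∉ S := hxyS y (Sym2.mem_mk_right x y)
  set H := G.deleteEdges {s(x, y)}
  have hHadj : ∀ a b, G.Adj a b → b ≠ x → b ≠ y → H.Adj a b := by
    intro a b hab hbx hby
    simp only [H, deleteEdges_adj, Set.mem_singleton_iff, Sym2.eq_iff]
    exact ⟨hab, by tauto⟩
  let x' : ↥(↑S : Set V)ᶜ := ⟨x, hxS⟩
  let y' : ↥(↑S : Set V)ᶜ := ⟨y, hyS⟩
  have hreach : ∀ a : ↥(↑S : Set V)ᶜ, a ≠ y' → (H.induce (↑S : Set V)ᶜ).Reachable a x' := by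
    intro a hay
    by_cases hax : a = x'
    · rw [hax]
    · have hax' : a.1 ≠ x := fun h => hax (Subtype.ext h)
      exact Adj.reachable (G := H.induce (↑S : Set V)ᶜ)
        (hHadj x a (hx a hax') hax' fun h => hay (Subtype.ext h)).symm
  refine ⟨S, ?_, fun z hyz hzx => ?_⟩
  · have hc : componentCount (H.induce (↑S : Set V)ᶜ) ≤ 2 :=
      (componentCount_le_card_of_forall_exists_reachable _ {x', y'} fun a =>
        if hay : a = y' then ⟨y', by simp, hay ▸ .rfl⟩ else ⟨x', by simp, hreach a hay⟩).trans
        Finset.card_le_two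
    have hlt : (S.card : ℝ≥0) < t * 2 :=
      (by exact_mod_cast hcard : (S.card : ℝ≥0) < _).trans_le
        (mul_le_mul_right (by exact_mod_cast hc) t)
    exact Nat.lt_ceil.mpr (mul_comm t 2 ▸ hlt)
  · by_contra hzS
    have hzy : z ≠ y := fun h => G.irrefl (h ▸ hyz)
    have hyx : (H.induce (↑S : Set V)ᶜ).Reachable y' x' :=
      (Adj.reachable (G := H.induce (↑S : Set V)ᶜ) (u := y') (v := ⟨z, hzS⟩)
        (hHadj y z hyz hzx hzy)).trans (hreach ⟨z, hzS⟩ fun h => hzy congr($h.1))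
    have hc : componentCount (H.induce (↑S : Set V)ᶜ) ≤ 1 :=
      componentCount_le_card_of_forall_exists_reachable _ {x'} fun a =>
        ⟨x', by simp, if hay : a = y' then hay ▸ hyx else hreach a hay⟩
    exact absurd hS (by unfold IsSeparator; omega)

theorem degree_eq_ceil [Fintype V] [DecidableRel G.Adj] (hmin : G.MinimallyTough)
    (htough : G.toughness = t) {v w : V} (hv : G.IsUniversalVertex v)
    (hw : ¬ G.IsUniversalVertex w) : G.degree w = ⌈2 * t⌉₊ := by
  classical
  obtain ⟨ρ, hρw, hwρ⟩ : ∃ ρ, ρ ≠ w ∧ ¬ G.Adj w ρ := by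
    simpa [IsUniversalVertex] using hw
  have hvw : v ≠ w := by rintro rfl; exact hw hv
  obtain ⟨S, hS, hnbr⟩ := hmin.exists_card_lt_ceil htough hv hvw
  have hsub : G.neighborFinset w ⊆ insert v S := fun z hz => by
    by_cases hzv : z = v
    · simp [hzv]
    · exact Finset.mem_insert_of_mem (hnbr z ((G.mem_neighborFinset w z).mp hz) hzv)
  have hle := (Finset.card_le_card hsub).trans (Finset.card_insert_le v S)
  have hge := ceil_two_mul_le_card htough (isSeparator_neighborFinset hρw.symm hwρ)
  rw [← card_neighborFinset_eq_degree]
  omega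

theorem MinimallyTough.card_lt_ceil_add_two [Fintype V] (hmin : G.MinimallyTough)
    (htough : G.toughness = t) {w₁ w₂ : V} (hw₁ : G.IsUniversalVertex w₁)
    (hw₂ : G.IsUniversalVertex w₂) (hne : w₁ ≠ w₂) : Fintype.card V < ⌈2 * t⌉₊ + 2 := by
  classical
  obtain ⟨S, hS, hcover⟩ := hmin.exists_card_lt_ceil htough hw₁ hne
  have hsub : Finset.univ ⊆ insert w₁ (insert w₂ S) := fun z _ => by
    by_cases h₁ : z = w₁
    · simp [h₁]
    by_cases h₂ : z = w₂
    · simp [h₂]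
    exact Finset.mem_insert_of_mem (Finset.mem_insert_of_mem (hcover z (hw₂ z h₂) h₁))
  calc Fintype.card V = Finset.univ.card := Finset.card_univ.symm
    _ ≤ (insert w₁ (insert w₂ S)).card := Finset.card_le_card hsub
    _ ≤ S.card + 2 := (Finset.card_insert_le _ _).trans (by grind [Finset.card_insert_le])
    _ < ⌈2 * t⌉₊ + 2 := by omega

end Toughness

theorem Walk.isChordless_of_forall_length_le {D : Set V} {x y : V} (P : G.Walk x y)
    (hD : ∀ z ∈ P.support, z ∈ D)
    (hmin : ∀ q : G.Walk x y, (∀ z ∈ q.support, z ∈ D) → P.length ≤ q.length) :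
    P.IsChordless := by
  have hshort : ∀ i j, i < j → j ≤ P.length → G.Adj (P.getVert i) (P.getVert j) → j = i + 1 := by
    intro i j hij hj hadj
    have := hmin ((P.take i).append (Walk.cons hadj (P.drop j))) fun z hz => by
      simp only [Walk.support_append, Walk.support_cons, List.tail_cons, List.mem_append,
        Walk.support_take, Walk.drop_support_eq_support_drop_min] at hz
      exact hD z (hz.elim (List.mem_of_mem_take ·) (List.mem_of_mem_drop ·))
    simp only [Walk.length_append, Walk.take_length, Walk.length_cons, Walk.drop_length] at this
    omega
  rw [Walk.isChordless_iff_forall_mem_edges]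
  intro a b ha hb hab
  obtain ⟨i, rfl, hi⟩ := Walk.mem_support_iff_exists_getVert.mp ha
  obtain ⟨j, rfl, hj⟩ := Walk.mem_support_iff_exists_getVert.mp hb
  rw [Walk.mk_mem_edges_iff_exists]
  rcases lt_trichotomy i j with h | rfl | h
  · obtain rfl := hshort i j h hj hab
    exact ⟨i, by omega, rfl⟩
  · exact absurd hab G.irrefl
  · obtain rfl := hshort j i h hi hab.symm
    exact ⟨j, by omega, Sym2.eq_swap⟩

theorem exists_isPath_isChordless {D : Set V} {x y : V} (p : G.Walk x y)
    (hp : ∀ z ∈ p.support, z ∈ D) :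
    ∃ P : G.Walk x y, P.IsPath ∧ P.IsChordless ∧ ∀ z ∈ P.support, z ∈ D := by
  classical
  have hex : ∃ n, ∃ q : G.Walk x y, q.length = n ∧ ∀ z ∈ q.support, z ∈ D := ⟨_, p, rfl, hp⟩
  obtain ⟨q, hqlen, hqD⟩ := Nat.find_spec hex
  have hbD : ∀ z ∈ q.bypass.support, z ∈ D :=
    fun z hz => hqD z (q.support_bypass_subset_support hz)
  refine ⟨q.bypass, q.bypass_isPath, q.bypass.isChordless_of_forall_length_le hbD ?_, hbD⟩
  intro r hr
  have := Nat.find_min' hex ⟨r, rfl, hr⟩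
  have := q.length_bypass_le_length
  omega

/-- Closing the path through `u` gives a chordless cycle, which in a chordal graph must be a
triangle. -/
theorem IsChordal.adj_of_isChordless (hG : G.IsChordal) {u x y : V} (P : G.Walk x y)
    (hP : P.IsPath) (hPc : P.IsChordless) (hxy : x ≠ y) (hux : G.Adj u x) (huy : G.Adj u y)
    (hu : u ∉ P.support) (hnbr : ∀ z ∈ P.support, G.Adj u z → z = x ∨ z = y) : G.Adj x y := by
  by_contra hnxy
  have hlen : 2 ≤ P.length := by
    have h0 : P.length ≠ 0 := fun h => hxy (Walk.eq_of_length_eq_zero h)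
    have h1 : P.length ≠ 1 := fun h => hnxy (Walk.adj_of_length_eq_one h)
    omega
  let c : G.Walk u u := Walk.cons hux (P.concat huy.symm)
  have hcyc : c.IsCycle := by
    refine (Walk.cons_isCycle_iff _ _).mpr ⟨hP.concat hu huy.symm, fun h => ?_⟩
    rw [Walk.edges_concat, List.concat_eq_append, List.mem_append, List.mem_singleton,
      Sym2.eq_iff] at h
    rcases h with h | ⟨rfl, -⟩ | ⟨-, rfl⟩
    · exact hu (P.fst_mem_support_of_mem_edges h)
    · exact hu P.end_mem_support
    · exact hxy rfl
  obtain ⟨a, b, ha, hb, hab, hchord⟩ :=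
    hG u c hcyc (by simp only [c, Walk.length_cons, Walk.length_concat]; omega)
  have hedges : ∀ e ∈ P.edges, e ∈ c.edges := fun e he => by simp [c, he]
  have hu_edge : ∀ z ∈ P.support, G.Adj u z → s(u, z) ∈ c.edges := by
    intro z hz huz
    rcases hnbr z hz huz with rfl | rfl <;> simp [c, Sym2.eq_swap]
  have hsupp : ∀ z ∈ c.support, z = u ∨ z ∈ P.support := fun z hz => by
    simp only [c, Walk.support_cons, Walk.support_concat, List.mem_cons, List.mem_append] at hz
    tauto
  rcases hsupp a ha with rfl | haP <;> rcases hsupp b hb with rfl | hbP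
  · exact G.irrefl hab
  · exact hchord (hu_edge b hbP hab)
  · exact hchord (Sym2.eq_swap ▸ hu_edge a haP hab.symm)
  · exact hchord (hedges _ (hPc.mem_edges haP hbP hab))

theorem IsChordal.adj_of_exists_adj_mem (hG : G.IsChordal) {u x y : V} {C : Set V}
    (hC : ∀ c ∈ C, c ≠ u ∧ ¬ G.Adj u c)
    (hCconn : ∀ a ∈ C, ∀ b ∈ C, ∃ p : G.Walk a b, ∀ z ∈ p.support, z ∈ C)
    (hux : G.Adj u x) (huy : G.Adj u y) (hxy : x ≠ y)
    (hxC : ∃ c ∈ C, G.Adj x c) (hyC : ∃ c ∈ C, G.Adj y c) : G.Adj x y := by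
  obtain ⟨a, ha, hxa⟩ := hxC
  obtain ⟨b, hb, hyb⟩ := hyC
  obtain ⟨p, hp⟩ := hCconn a ha b hb
  obtain ⟨P, hP, hPc, hPD⟩ := exists_isPath_isChordless (D := insert x (insert y C))
    (Walk.cons hxa (p.concat hyb.symm)) fun z hz => by
      simp only [Walk.support_cons, Walk.support_concat, List.mem_cons, List.mem_append,
        List.not_mem_nil, or_false] at hz
      rcases hz with rfl | hz | rfl
      exacts [Or.inl rfl, Or.inr (Or.inr (hp z hz)), Or.inr (Or.inl rfl)]
  refine hG.adj_of_isChordless P hP hPc hxy hux huy (fun hu => ?_) fun z hz huz => ?_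
  · rcases hPD u hu with h | h | h
    exacts [G.irrefl (h ▸ hux), G.irrefl (h ▸ huy), (hC u h).1 rfl]
  · rcases hPD z hz with h | h | h
    exacts [Or.inl h, Or.inr h, absurd huz (hC z h).2]

/-- Dirac's lemma, for a minimal separator of the form `N(u)`. -/
theorem IsChordal.isClique_neighborSet [Fintype V] [DecidableEq V] [DecidableRel G.Adj]
    (hG : G.IsChordal) {u r : V} (hur : u ≠ r) (hnadj : ¬ G.Adj u r)
    (hmin : ∀ a ∈ G.neighborFinset u, ¬ G.IsSeparator ((G.neighborFinset u).erase a)) :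
    G.IsClique (G.neighborSet u) := by
  -- the component of `r` in `G - N[u]`
  let C : Set V := {c | ∃ p : G.Walk c r, ∀ z ∈ p.support, z ≠ u ∧ ¬ G.Adj u z}
  have hC : ∀ c ∈ C, c ≠ u ∧ ¬ G.Adj u c := fun c ⟨p, hp⟩ => hp c p.start_mem_support
  have hCwalk : ∀ c ∈ C, ∃ p : G.Walk c r, ∀ z ∈ p.support, z ∈ C := by
    rintro c ⟨p, hp⟩
    exact ⟨p, fun z hz => ⟨p.dropUntil z hz,
      fun w hw => hp w (p.support_dropUntil_subset_support hz hw)⟩⟩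
  have hCconn : ∀ a ∈ C, ∀ b ∈ C, ∃ p : G.Walk a b, ∀ z ∈ p.support, z ∈ C := by
    intro a ha b hb
    obtain ⟨p, hp⟩ := hCwalk a ha
    obtain ⟨q, hq⟩ := hCwalk b hb
    refine ⟨p.append q.reverse, fun z hz => ?_⟩
    rw [Walk.mem_support_append_iff, Walk.support_reverse, List.mem_reverse] at hz
    exact hz.elim (hp z) (hq z)
  have hnbrC : ∀ a, G.Adj u a → ∃ c ∈ C, G.Adj a c := by
    intro a hua
    by_contra! hno
    refine hmin a (by simpa using hua) (isSeparator_of_closed (X := Cᶜ) ?_ (x := u) (y := r)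
      (by simp) (by simp [hnadj]) (fun hu => (hC u hu).1 rfl)
      (not_not.mpr ⟨.nil, by simp [hur.symm, hnadj]⟩))
    intro c hc hcS z hcz hzS ⟨q, hq⟩
    obtain ⟨hzu, huz⟩ := hq z q.start_mem_support
    have hcu : c ≠ u := by rintro rfl; exact huz hcz
    have huc : ¬ G.Adj u c := by
      intro huc
      obtain rfl : c = a := by simpa [huc] using hcS
      exact hno z ⟨q, hq⟩ hcz
    exact hc ⟨Walk.cons hcz q, fun w hw => by
      rw [Walk.support_cons, List.mem_cons] at hw
      exact hw.elim (· ▸ ⟨hcu, huc⟩) (hq w)⟩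
  intro x hx y hy hxy
  exact hG.adj_of_exists_adj_mem hC hCconn hx hy hxy (hnbrC x hx) (hnbrC y hy)

theorem not_isUniversalVertex_of_not_adj {u r : V} (hur : u ≠ r) (hnadj : ¬ G.Adj u r) :
    ¬ G.IsUniversalVertex u :=
  fun h => hnadj (h r hur.symm)

section Universal

variable [Fintype V]

open Classical in
noncomputable def universalFinset (G : SimpleGraph V) : Finset V :=
  {v | G.IsUniversalVertex v}

@[simp]
theorem mem_universalFinset {v : V} : v ∈ G.universalFinset ↔ G.IsUniversalVertex v := by
  simp [universalFinset]

variable [DecidableRel G.Adj]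

theorem neighborFinset_eq_insert_of_isClique [DecidableEq V] {u c : V}
    (hcl : G.IsClique (G.neighborSet u)) (huc : G.Adj u c) (hdeg : G.degree c ≤ G.degree u) :
    G.neighborFinset c = insert u ((G.neighborFinset u).erase c) := by
  have hsub : insert u ((G.neighborFinset u).erase c) ⊆ G.neighborFinset c := by
    intro z hz
    simp only [Finset.mem_insert, Finset.mem_erase, mem_neighborFinset] at hz ⊢
    rcases hz with rfl | ⟨hzc, huz⟩
    exacts [huc.symm, hcl huc huz hzc.symm]
  refine (Finset.eq_of_subset_of_card_le hsub ?_).symm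
  rw [Finset.card_insert_of_notMem (by simp), Finset.card_erase_of_mem (by simpa),
    card_neighborFinset_eq_degree, card_neighborFinset_eq_degree]
  have : 0 < G.degree u := G.degree_pos_iff_exists_adj u |>.mpr ⟨c, huc⟩
  omega

theorem universalFinset_eq_neighborFinset {t : ℝ≥0} (hG : G.IsChordal) (hmin : G.MinimallyTough)
    (htough : G.toughness = t) {v u r : V} (hv : G.IsUniversalVertex v) (hur : u ≠ r)
    (hnadj : ¬ G.Adj u r) : G.universalFinset = G.neighborFinset u := by
  classical
  have hdeg : ∀ w, ¬ G.IsUniversalVertex w → G.degree w = ⌈2 * t⌉₊ :=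
    fun w hw => degree_eq_ceil hmin htough hv hw
  have hu := not_isUniversalVertex_of_not_adj hur hnadj
  have hr := not_isUniversalVertex_of_not_adj hur.symm (hnadj ∘ Adj.symm)
  have hsep : ∀ S, G.IsSeparator S → G.degree u ≤ S.card :=
    fun S hS => hdeg u hu ▸ ceil_two_mul_le_card htough hS
  have hcl : G.IsClique (G.neighborSet u) := hG.isClique_neighborSet hur hnadj fun a ha hS => by
    have := hsep _ hS
    rw [Finset.card_erase_of_mem ha, card_neighborFinset_eq_degree] at this
    have : 0 < G.degree u := (G.degree_pos_iff_exists_adj u).mpr ⟨a, by simpa using ha⟩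
    omega
  have hWsep : G.IsSeparator G.universalFinset := by
    refine isSeparator_of_closed (X := {z | z = u ∨ G.Adj u z}) ?_ (x := u) (y := r)
      (by simpa using hu) (by simpa using hr) (Or.inl rfl) (by simp [hur.symm, hnadj])
    rintro c (rfl | huc) hcW z hcz -
    · exact Or.inr hcz
    · have hcN := neighborFinset_eq_insert_of_isClique hcl huc
        ((hdeg c (by simpa using hcW)).trans (hdeg u hu).symm).le
      have hz : z ∈ G.neighborFinset c := (mem_neighborFinset _ _ _).mpr hcz
      rw [hcN, Finset.mem_insert, Finset.mem_erase, mem_neighborFinset] at hz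
      exact hz.imp_right And.right
  refine Finset.eq_of_subset_of_card_le (fun w hw => ?_) ?_
  · rw [mem_universalFinset] at hw
    exact (mem_neighborFinset _ _ _).mpr (hw u (by rintro rfl; exact hu hw)).symm
  · rw [card_neighborFinset_eq_degree]
    exact hsep _ hWsep

end Universal

end SimpleGraph

/-- For every real number `t > 1`, there is no minimally `t`-tough chordal graph with a
universal vertex. -/
theorem stmt_15 {V : Type*} [Fintype V] (G : SimpleGraph V) (t : ℝ≥0) (ht : 1 < t)
    (hchordal : G.IsChordal) (v : V) (hv : G.IsUniversalVertex v)
    (htough : G.toughness = (t : ℝ≥0∞)) (hmin : G.MinimallyTough) :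
    False := by
  classical
  obtain ⟨u, r, hur, hnadj⟩ := exists_ne_not_adj_of_toughness_ne_top (htough ▸ ENNReal.coe_ne_top)
  have hu := not_isUniversalVertex_of_not_adj hur hnadj
  have hr := not_isUniversalVertex_of_not_adj hur.symm (hnadj ∘ Adj.symm)
  have hW := universalFinset_eq_neighborFinset hchordal hmin htough hv hur hnadj
  have hWcard : G.universalFinset.card = ⌈2 * t⌉₊ := by
    rw [hW, card_neighborFinset_eq_degree, degree_eq_ceil hmin htough hv hu]
  have hm : 2 < ⌈2 * t⌉₊ := Nat.lt_ceil.mpr (by simpa using mul_lt_mul_of_pos_left ht two_pos)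
  obtain ⟨w₁, hw₁, w₂, hw₂, hne⟩ := Finset.one_lt_card.mp (by omega : 1 < G.universalFinset.card)
  have hlt := hmin.card_lt_ceil_add_two htough (mem_universalFinset.mp hw₁)
    (mem_universalFinset.mp hw₂) hne
  have hge : G.universalFinset.card + 2 ≤ Fintype.card V := by
    rw [← Finset.card_pair hur, ← Finset.card_union_of_disjoint (by simp [hu, hr])]
    exact Finset.card_le_univ _
  omega
end

section
/- Let G be a co-chordal graph whose complement is connected with diameter d ≥ 3, let u, w be simplicial vertices of the complement at distance d, let U = N_{Ḡ}(u), W = N_{Ḡ}(w), X = V(G) \ (U ∪ W ∪ {u,w}), and let m be the maximum size of a matching in G[U ∪ W]. Then κ_G(u,w) = |X| + m + 1. -/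
open SimpleGraph
open scoped ENNReal NNReal

/-! In `G`, the vertex `u` is adjacent to everything outside `U ∪ {u}` and `w` to everything
outside `W ∪ {w}`. Since `d ≥ 3`, `uw` is an edge and `U ∪ {u}`, `W ∪ {w}` are disjoint; since
`u` and `w` are simplicial in `Ḡ`, the sets `U` and `W` are independent in `G`, so every edge of
`G[U ∪ W]` joins `W` to `U`. The edge `uw`, the paths `u x w` for `x ∈ X` and `u b a w` for the
edges `ba` of a maximum matching of `G[U ∪ W]` are internally disjoint. Conversely, a `u`–`w` path
other than `uw` starts with a vertex of `X ∪ W`, and if it avoids `X` its second and third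
vertices are some `b ∈ W` and `a ∈ U`; internally disjoint paths therefore use distinct vertices of
`X` or disjoint edges of `G[U ∪ W]`. -/

namespace SimpleGraph

variable {V : Type*} {G : SimpleGraph V} {u w : V}

theorem bddAbove_ncard_edgeSet_isMatching [Finite V] :
    BddAbove {n | ∃ M : G.Subgraph, M.IsMatching ∧ M.edgeSet.ncard = n} :=
  ⟨Nat.card (Sym2 V), by rintro _ ⟨M, -, rfl⟩; exact Set.ncard_le_card _⟩

theorem Subgraph.IsMatching.ncard_edgeSet_le_maxMatching [Finite V] {M : G.Subgraph}
    (hM : M.IsMatching) : M.edgeSet.ncard ≤ G.maxMatching :=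
  le_csSup bddAbove_ncard_edgeSet_isMatching ⟨M, hM, rfl⟩

theorem exists_isMatching_ncard_edgeSet_eq_maxMatching [Finite V] :
    ∃ M : G.Subgraph, M.IsMatching ∧ M.edgeSet.ncard = G.maxMatching :=
  Nat.sSup_mem (s := {n | ∃ M : G.Subgraph, M.IsMatching ∧ M.edgeSet.ncard = n})
    ⟨0, ⊥, fun _ hv => by simp at hv, by simp⟩ bddAbove_ncard_edgeSet_isMatching

/-- A matching of `G[U ∪ W]` all of whose edges join `W` to `U`, each edge `s(b, a)` recorded as
the ordered pair `(b, a)` with `b ∈ W` and `a ∈ U`. -/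
structure IsCrossMatching (G : SimpleGraph V) (W U : Set V) (M : Set (V × V)) : Prop where
  fst_mem : ∀ p ∈ M, p.1 ∈ W
  snd_mem : ∀ p ∈ M, p.2 ∈ U
  adj : ∀ p ∈ M, G.Adj p.1 p.2
  injOn_fst : M.InjOn Prod.fst
  injOn_snd : M.InjOn Prod.snd

namespace IsCrossMatching

variable {U W : Set V} {M : Set (V × V)}

theorem injOn_mk (hUW : Disjoint U W) (hM : G.IsCrossMatching W U M) :
    M.InjOn fun p => s(p.1, p.2) := by
  intro p hp q hq h
  rcases Sym2.eq_iff.mp h with ⟨h1, h2⟩ | ⟨h1, -⟩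
  · exact Prod.ext h1 h2
  · exact (hUW.ne_of_mem (hM.snd_mem q hq) (hM.fst_mem p hp) h1.symm).elim

theorem ncard_le_maxMatching [Finite V] (hUW : Disjoint U W) (hM : G.IsCrossMatching W U M) :
    M.ncard ≤ (G.induce (U ∪ W)).maxMatching := by
  let R : ↥(U ∪ W) → ↥(U ∪ W) → Prop := fun x y => (x.1, y.1) ∈ M ∨ (y.1, x.1) ∈ M
  have hR : ∀ {x y y'}, R x y → R x y' → y = y' := by
    rintro x y y' (h | h) (h' | h') <;> apply Subtype.ext
    · exact congrArg Prod.snd (hM.injOn_fst h h' rfl)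
    · exact (hUW.ne_of_mem (hM.snd_mem _ h') (hM.fst_mem _ h) rfl).elim
    · exact (hUW.ne_of_mem (hM.snd_mem _ h) (hM.fst_mem _ h') rfl).elim
    · exact congrArg Prod.fst (hM.injOn_snd h h' rfl)
  let N : (G.induce (U ∪ W)).Subgraph :=
    { verts := {x | ∃ y, R x y}
      Adj := R
      adj_sub := by rintro x y (h | h); exacts [hM.adj _ h, (hM.adj _ h).symm]
      edge_vert := fun h => ⟨_, h⟩
      symm := ⟨fun _ _ => Or.symm⟩ }
  have hN : N.IsMatching := fun x ⟨y, hy⟩ => ⟨y, hy, fun _ hy' => hR hy' hy⟩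
  have hsub : (fun p => s(p.1, p.2)) '' M ⊆ Sym2.map Subtype.val '' N.edgeSet := by
    rintro _ ⟨p, hp, rfl⟩
    exact ⟨s(⟨p.1, .inr (hM.fst_mem p hp)⟩, ⟨p.2, .inl (hM.snd_mem p hp)⟩), Or.inl hp, rfl⟩
  calc M.ncard = ((fun p => s(p.1, p.2)) '' M).ncard := (hM.injOn_mk hUW).ncard_image.symm
    _ ≤ (Sym2.map Subtype.val '' N.edgeSet).ncard := Set.ncard_le_ncard hsub
    _ ≤ N.edgeSet.ncard := Set.ncard_image_le
    _ ≤ _ := hN.ncard_edgeSet_le_maxMatching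

end IsCrossMatching

theorem exists_isCrossMatching_ncard_eq_maxMatching [Finite V] {U W : Set V}
    (hUW : Disjoint U W) (hU : G.IsIndepSet U) (hW : G.IsIndepSet W) :
    ∃ M, G.IsCrossMatching W U M ∧ M.ncard = (G.induce (U ∪ W)).maxMatching := by
  obtain ⟨N, hN, hNcard⟩ := (G.induce (U ∪ W)).exists_isMatching_ncard_edgeSet_eq_maxMatching
  have hadj : ∀ {x y}, N.Adj x y → G.Adj x.1 y.1 := fun h => N.adj_sub h
  let M : Set (V × V) := {p | p.1 ∈ W ∧ ∃ x y, N.Adj x y ∧ (x.1, y.1) = p}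
  have hM : G.IsCrossMatching W U M := by
    refine ⟨fun p hp => hp.1, ?_, ?_, ?_, ?_⟩
    · rintro p ⟨hpW, x, y, hxy, rfl⟩
      exact y.2.resolve_right fun hyW => hW hpW hyW (hadj hxy).ne (hadj hxy)
    · rintro p ⟨-, x, y, hxy, rfl⟩
      exact hadj hxy
    · rintro p ⟨-, x, y, hxy, rfl⟩ q ⟨-, x', y', hxy', rfl⟩ (h : x.1 = x'.1)
      obtain rfl := Subtype.ext h
      rw [hN.eq_of_adj_left hxy hxy']
    · rintro p ⟨-, x, y, hxy, rfl⟩ q ⟨-, x', y', hxy', rfl⟩ (h : y.1 = y'.1)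
      obtain rfl := Subtype.ext h
      rw [hN.eq_of_adj_right hxy hxy']
  refine ⟨M, hM, le_antisymm (hM.ncard_le_maxMatching hUW) ?_⟩
  have hsub : Sym2.map Subtype.val '' N.edgeSet ⊆ (fun p => s(p.1, p.2)) '' M := by
    rintro _ ⟨e, he, rfl⟩
    induction e using Sym2.ind with | _ x y => ?_
    rw [Subgraph.mem_edgeSet] at he
    rcases x.2 with hxU | hxW
    · have hyW : y.1 ∈ W := y.2.resolve_left fun hyU => hU hxU hyU (hadj he).ne (hadj he)
      exact ⟨(y.1, x.1), ⟨hyW, y, x, he.symm, rfl⟩, Sym2.eq_swap⟩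
    · exact ⟨(x.1, y.1), ⟨hxW, x, y, he, rfl⟩, rfl⟩
  calc (G.induce (U ∪ W)).maxMatching = (Sym2.map Subtype.val '' N.edgeSet).ncard := by
        rw [← hNcard, (Sym2.map.injective Subtype.val_injective).injOn.ncard_image]
    _ ≤ ((fun p => s(p.1, p.2)) '' M).ncard := Set.ncard_le_ncard hsub
    _ = M.ncard := (hM.injOn_mk hUW).ncard_image

instance [Finite V] : Finite (G.Path u w) := by
  classical
  have := Fintype.ofFinite V
  infer_instance

theorem Path.eq_of_mem_support_of_pairwise {P : Set (G.Path u w)}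
    (hP : P.Pairwise fun p q => InternallyDisjoint (p : G.Walk u w) q) {p q : G.Path u w}
    (hp : p ∈ P) (hq : q ∈ P) {v : V} (hvp : v ∈ (p : G.Walk u w).support)
    (hvq : v ∈ (q : G.Walk u w).support) (hvu : v ≠ u) (hvw : v ≠ w) : p = q := by
  by_contra hpq
  exact (hP hp hq hpq v hvp hvq).elim hvu hvw

theorem ncard_le_of_forall_exists_mem_support [Finite V] {P : Set (G.Path u w)}
    (hP : P.Pairwise fun p q => InternallyDisjoint (p : G.Walk u w) q) {S : Set V}
    (huS : u ∉ S) (hwS : w ∉ S) (hPS : ∀ p ∈ P, ∃ v ∈ S, v ∈ (p : G.Walk u w).support) :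
    P.ncard ≤ S.ncard := by
  have : Nonempty V := ⟨u⟩
  choose! f hfS hfp using hPS
  refine Set.ncard_le_ncard_of_injOn f hfS fun p hp q hq h => ?_
  exact Path.eq_of_mem_support_of_pairwise hP hp hq (hfp p hp) (h ▸ hfp q hq)
    (ne_of_mem_of_not_mem (hfS p hp) huS) (ne_of_mem_of_not_mem (hfS p hp) hwS)

theorem ncard_le_maxMatching_of_forall_exists_adj_mem_support [Finite V] {P : Set (G.Path u w)}
    (hP : P.Pairwise fun p q => InternallyDisjoint (p : G.Walk u w) q) {U W : Set V}
    (hUW : Disjoint U W) (hu : u ∉ U ∪ W) (hw : w ∉ U ∪ W)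
    (hPUW : ∀ p ∈ P, ∃ b ∈ W, ∃ a ∈ U,
      G.Adj b a ∧ b ∈ (p : G.Walk u w).support ∧ a ∈ (p : G.Walk u w).support) :
    P.ncard ≤ (G.induce (U ∪ W)).maxMatching := by
  have : Nonempty V := ⟨u⟩
  choose! b hbW a haU hba hbp hap using hPUW
  have hne : ∀ {v}, v ∈ U ∪ W → v ≠ u ∧ v ≠ w := fun hv =>
    ⟨ne_of_mem_of_not_mem hv hu, ne_of_mem_of_not_mem hv hw⟩
  have hb : P.InjOn b := fun p hp q hq h =>
    Path.eq_of_mem_support_of_pairwise hP hp hq (hbp p hp) (h ▸ hbp q hq)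
      (hne (.inr (hbW p hp))).1 (hne (.inr (hbW p hp))).2
  have ha : P.InjOn a := fun p hp q hq h =>
    Path.eq_of_mem_support_of_pairwise hP hp hq (hap p hp) (h ▸ hap q hq)
      (hne (.inl (haU p hp))).1 (hne (.inl (haU p hp))).2
  have hM : G.IsCrossMatching W U ((fun p => (b p, a p)) '' P) := by
    refine ⟨?_, ?_, ?_, ?_, ?_⟩
    · rintro _ ⟨p, hp, rfl⟩; exact hbW p hp
    · rintro _ ⟨p, hp, rfl⟩; exact haU p hp
    · rintro _ ⟨p, hp, rfl⟩; exact hba p hp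
    · rintro _ ⟨p, hp, rfl⟩ _ ⟨q, hq, rfl⟩ h; rw [hb hp hq h]
    · rintro _ ⟨p, hp, rfl⟩ _ ⟨q, hq, rfl⟩ h; rw [ha hp hq h]
  have hinj : P.InjOn fun p => (b p, a p) := fun p hp q hq h => hb hp hq (congrArg Prod.fst h)
  exact hinj.ncard_image ▸ hM.ncard_le_maxMatching hUW

theorem Walk.IsPath.support_eq_or_exists {U W : Set V} (hu : ∀ a ∈ U, ¬G.Adj u a)
    (hw : ∀ b ∈ W, ¬G.Adj w b) (hW : G.IsIndepSet W) (huw : u ≠ w) {p : G.Walk u w}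
    (hp : p.IsPath) :
    p.support = [u, w] ∨ (∃ x ∈ (U ∪ W ∪ {u, w})ᶜ, x ∈ p.support) ∨
      ∃ b ∈ W, ∃ a ∈ U, G.Adj b a ∧ b ∈ p.support ∧ a ∈ p.support := by
  match p, hp with
  | .nil, _ => exact absurd rfl huw
  | .cons _ .nil, _ => exact .inl rfl
  | .cons (v := b) hub (.cons (v := a) hba q), hp =>
    right
    simp only [cons_isPath_iff, support_cons, List.mem_cons, not_or] at hp
    by_cases hbX : b ∈ (U ∪ W ∪ {u, w})ᶜ
    · exact .inl ⟨b, hbX, by simp⟩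
    have hbW : b ∈ W := by
      have hbw : b ≠ w := fun h => hp.1.2 (h ▸ q.end_mem_support)
      simp only [Set.mem_compl_iff, Set.mem_union, Set.mem_insert_iff, Set.mem_singleton_iff,
        not_not] at hbX
      tauto
    by_cases haX : a ∈ (U ∪ W ∪ {u, w})ᶜ
    · exact .inl ⟨a, haX, by simp⟩
    have haU : a ∈ U := by
      have haW : a ∉ W := fun h => hW hbW h hba.ne hba
      have haw : a ≠ w := fun h => hw b hbW (h ▸ hba.symm)
      have hau : a ≠ u := fun h => hp.2.2 (h ▸ q.start_mem_support)
      simp only [Set.mem_compl_iff, Set.mem_union, Set.mem_insert_iff, Set.mem_singleton_iff,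
        not_not] at haX
      tauto
    exact .inr ⟨b, hbW, a, haU, hba, by simp, by simp⟩

theorem ncard_le_of_pairwise_internallyDisjoint [Finite V] {U W : Set V}
    (hu : ∀ a ∈ U, ¬G.Adj u a) (hw : ∀ b ∈ W, ¬G.Adj w b) (hW : G.IsIndepSet W)
    (hUW : Disjoint (insert u U) (insert w W)) (huU : u ∉ U) (hwW : w ∉ W)
    {P : Set (G.Path u w)} (hP : P.Pairwise fun p q => InternallyDisjoint (p : G.Walk u w) q) :
    P.ncard ≤ (U ∪ W ∪ {u, w})ᶜ.ncard + (G.induce (U ∪ W)).maxMatching + 1 := by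
  have huw : u ≠ w := hUW.ne_of_mem (Set.mem_insert u U) (Set.mem_insert w W)
  have huW : u ∉ W := fun h => hUW.ne_of_mem (Set.mem_insert u U) (Set.mem_insert_of_mem w h) rfl
  have hwU : w ∉ U := fun h => hUW.ne_of_mem (Set.mem_insert_of_mem u h) (Set.mem_insert w W) rfl
  let P₀ := {p ∈ P | (p : G.Walk u w).support = [u, w]}
  let P₁ := {p ∈ P | ∃ x ∈ (U ∪ W ∪ {u, w})ᶜ, x ∈ (p : G.Walk u w).support}
  let P₂ := {p ∈ P | ∃ b ∈ W, ∃ a ∈ U,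
    G.Adj b a ∧ b ∈ (p : G.Walk u w).support ∧ a ∈ (p : G.Walk u w).support}
  have hcover : P ⊆ P₁ ∪ P₂ ∪ P₀ := fun p hp => by
    rcases p.2.support_eq_or_exists hu hw hW huw with h | h | h
    exacts [.inr ⟨hp, h⟩, .inl (.inl ⟨hp, h⟩), .inl (.inr ⟨hp, h⟩)]
  have h₀ : P₀.ncard ≤ 1 := (Set.ncard_le_one_iff).mpr fun hp hq =>
    Subtype.ext (Walk.ext_support (hp.2.trans hq.2.symm))
  have h₁ : P₁.ncard ≤ (U ∪ W ∪ {u, w})ᶜ.ncard :=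
    ncard_le_of_forall_exists_mem_support (hP.mono (Set.sep_subset _ _)) (by simp) (by simp)
      fun p hp => hp.2
  have h₂ : P₂.ncard ≤ (G.induce (U ∪ W)).maxMatching :=
    ncard_le_maxMatching_of_forall_exists_adj_mem_support (hP.mono (Set.sep_subset _ _))
      (hUW.mono (Set.subset_insert u U) (Set.subset_insert w W))
      (by simp [huU, huW]) (by simp [hwU, hwW]) fun p hp => hp.2
  calc P.ncard ≤ (P₁ ∪ P₂ ∪ P₀).ncard := Set.ncard_le_ncard hcover
    _ ≤ P₁.ncard + P₂.ncard + P₀.ncard :=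
      (Set.ncard_union_le _ _).trans (add_le_add_left (Set.ncard_union_le _ _) _)
    _ ≤ _ := by gcongr

theorem Walk.isPath_of_support_eq {p : G.Walk u w} {l : List V} (hp : p.support = u :: l ++ [w])
    (hl : l.Nodup) (hne : ∀ v ∈ l, v ≠ u ∧ v ≠ w) (huw : u ≠ w) : p.IsPath := by
  refine .mk' ?_
  rw [hp, List.cons_append, List.nodup_cons, List.nodup_append]
  simp only [List.mem_append, List.mem_singleton, not_or, List.nodup_singleton]
  exact ⟨⟨fun h => (hne u h).1 rfl, huw⟩, hl, trivial, fun v hv _ hb => hb ▸ (hne v hv).2⟩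

theorem exists_pairwise_internallyDisjoint_ncard_eq_card {ι : Type*} {f : ι → G.Path u w}
    {l : ι → List V} (hf : ∀ i, (f i : G.Walk u w).support = u :: l i ++ [w])
    (hl : Function.Injective l) (hdisj : ∀ i j, ∀ v ∈ l i, v ∈ l j → i = j) :
    ∃ P : Set (G.Path u w), P.Pairwise (fun p q => InternallyDisjoint (p : G.Walk u w) q) ∧
      P.ncard = Nat.card ι := by
  have hinj : Function.Injective f := fun i j h => hl <| by
    simpa [hf] using congrArg (fun p : G.Path u w => (p : G.Walk u w).support) h
  refine ⟨Set.range f, ?_, Set.ncard_range_of_injective hinj⟩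
  rintro _ ⟨i, rfl⟩ _ ⟨j, rfl⟩ hij v hvi hvj
  simp only [hf, List.cons_append, List.mem_cons, List.mem_append, List.not_mem_nil,
    or_false] at hvi hvj
  rcases hvi with h | h | h
  · exact .inl h
  · rcases hvj with h' | h' | h'
    · exact .inl h'
    · exact (hij (congrArg f (hdisj i j v h h'))).elim
    · exact .inr h'
  · exact .inr h

/-- The interiors of the paths `u x w` (`x ∈ X`), `u b a w` (`(b, a) ∈ M`) and `u w`. -/
def crossPathInterior (X : Set V) (M : Set (V × V)) : (X ⊕ M) ⊕ Unit → List V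
  | .inl (.inl x) => [x]
  | .inl (.inr p) => [p.1.1, p.1.2]
  | .inr () => []

theorem crossPathInterior_injective (X : Set V) (M : Set (V × V)) :
    Function.Injective (crossPathInterior X M) := by
  rintro ((x | p) | ⟨⟩) ((y | q) | ⟨⟩) h <;> simp [crossPathInterior] at h ⊢
  exacts [Subtype.ext h, Subtype.ext (Prod.ext h.1 h.2)]

theorem IsCrossMatching.nodup_crossPathInterior {X U W : Set V} {M : Set (V × V)}
    (hM : G.IsCrossMatching W U M) (i : (X ⊕ M) ⊕ Unit) : (crossPathInterior X M i).Nodup := by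
  rcases i with (x | p) | ⟨⟩
  exacts [List.nodup_singleton _, by simp [crossPathInterior, (hM.adj p p.2).ne], List.nodup_nil]

theorem IsCrossMatching.eq_of_mem_crossPathInterior {X U W : Set V} {M : Set (V × V)}
    (hM : G.IsCrossMatching W U M) (hXU : Disjoint X U) (hXW : Disjoint X W) (hUW : Disjoint U W)
    {i j : (X ⊕ M) ⊕ Unit} {v : V} (hvi : v ∈ crossPathInterior X M i)
    (hvj : v ∈ crossPathInterior X M j) : i = j := by
  rcases i with (x | p) | ⟨⟩ <;> rcases j with (y | q) | ⟨⟩ <;>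
    simp only [crossPathInterior, List.mem_cons, List.not_mem_nil, or_false] at hvi hvj
  · rw [Subtype.ext (hvi.symm.trans hvj)]
  · subst hvi
    rcases hvj with h | h
    · exact (hXW.ne_of_mem x.2 (hM.fst_mem q q.2) h).elim
    · exact (hXU.ne_of_mem x.2 (hM.snd_mem q q.2) h).elim
  · subst hvj
    rcases hvi with h | h
    · exact (hXW.ne_of_mem y.2 (hM.fst_mem p p.2) h).elim
    · exact (hXU.ne_of_mem y.2 (hM.snd_mem p p.2) h).elim
  · rcases hvi with rfl | rfl <;> rcases hvj with h | h
    · rw [Subtype.ext (hM.injOn_fst p.2 q.2 h)]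
    · exact (hUW.ne_of_mem (hM.snd_mem q q.2) (hM.fst_mem p p.2) h.symm).elim
    · exact (hUW.ne_of_mem (hM.snd_mem p p.2) (hM.fst_mem q q.2) h).elim
    · rw [Subtype.ext (hM.injOn_snd p.2 q.2 h)]

theorem exists_pairwise_internallyDisjoint_ncard_eq [Finite V] {U W : Set V} {M : Set (V × V)}
    (hu : ∀ v ∉ insert u U, G.Adj u v) (hw : ∀ v ∉ insert w W, G.Adj w v)
    (hUW : Disjoint (insert u U) (insert w W)) (huU : u ∉ U) (hwW : w ∉ W)
    (hM : G.IsCrossMatching W U M) :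
    ∃ P : Set (G.Path u w), P.Pairwise (fun p q => InternallyDisjoint (p : G.Walk u w) q) ∧
      P.ncard = (U ∪ W ∪ {u, w})ᶜ.ncard + M.ncard + 1 := by
  set X := (U ∪ W ∪ {u, w})ᶜ
  have hX : ∀ x ∈ X, x ∉ insert u U ∧ x ∉ insert w W := fun x hx => by
    simp only [X, Set.mem_compl_iff, Set.mem_union, Set.mem_insert_iff, Set.mem_singleton_iff,
      not_or] at hx ⊢
    tauto
  have hMu : ∀ p ∈ M, p.1 ∉ insert u U := fun p hp h =>
    hUW.ne_of_mem h (Set.mem_insert_of_mem w (hM.fst_mem p hp)) rfl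
  have hMw : ∀ p ∈ M, p.2 ∉ insert w W := fun p hp h =>
    hUW.ne_of_mem (Set.mem_insert_of_mem u (hM.snd_mem p hp)) h rfl
  have hwu : w ∉ insert u U := fun h => hUW.ne_of_mem h (Set.mem_insert w W) rfl
  have huw : u ≠ w := fun h => hwu (h ▸ Set.mem_insert u U)
  have hne : ∀ i, ∀ v ∈ crossPathInterior X M i, v ≠ u ∧ v ≠ w := by
    rintro ((x | p) | ⟨⟩) v hv <;>
      simp only [crossPathInterior, List.mem_cons, List.not_mem_nil, or_false] at hv
    · subst hv
      exact ⟨fun h => (hX x x.2).1 (h ▸ Set.mem_insert u U),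
        fun h => (hX x x.2).2 (h ▸ Set.mem_insert w W)⟩
    · rcases hv with rfl | rfl
      · exact ⟨fun h => hMu p p.2 (h ▸ Set.mem_insert u U), fun h => hwW (h ▸ hM.fst_mem p p.2)⟩
      · exact ⟨fun h => huU (h ▸ hM.snd_mem p p.2), fun h => hMw p p.2 (h ▸ Set.mem_insert w W)⟩
  have hpath : ∀ {i} {p : G.Walk u w}, p.support = u :: crossPathInterior X M i ++ [w] →
      p.IsPath := fun hp => Walk.isPath_of_support_eq hp (hM.nodup_crossPathInterior _) (hne _) huw
  let f : (X ⊕ M) ⊕ Unit → G.Path u w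
    | .inl (.inl x) => ⟨.cons (hu x (hX x x.2).1) (.cons (hw x (hX x x.2).2).symm .nil),
        hpath (i := .inl (.inl x)) rfl⟩
    | .inl (.inr p) => ⟨.cons (hu _ (hMu p p.2)) (.cons (hM.adj p p.2)
        (.cons (hw _ (hMw p p.2)).symm .nil)), hpath (i := .inl (.inr p)) rfl⟩
    | .inr () => ⟨.cons (hu w hwu) .nil, hpath (i := .inr ()) rfl⟩
  obtain ⟨P, hP, hPcard⟩ := exists_pairwise_internallyDisjoint_ncard_eq_card (f := f)
    (by rintro ((x | p) | ⟨⟩) <;> rfl) (crossPathInterior_injective X M)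
    fun i j v => hM.eq_of_mem_crossPathInterior
      (disjoint_compl_left.mono_right (Set.subset_union_left.trans Set.subset_union_left))
      (disjoint_compl_left.mono_right (Set.subset_union_right.trans Set.subset_union_left))
      (hUW.mono (Set.subset_insert u U) (Set.subset_insert w W))
  exact ⟨P, hP, by simp only [hPcard, Nat.card_sum, Nat.card_unique, Nat.card_coe_set_eq]⟩

theorem localConnectivity_eq_ncard_add_maxMatching_add_one [Finite V] {U W : Set V}
    (hu : ∀ v, G.Adj u v ↔ v ∉ insert u U) (hw : ∀ v, G.Adj w v ↔ v ∉ insert w W)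
    (hU : G.IsIndepSet U) (hW : G.IsIndepSet W)
    (hUW : Disjoint (insert u U) (insert w W)) (huU : u ∉ U) (hwW : w ∉ W) :
    G.localConnectivity u w = (U ∪ W ∪ {u, w})ᶜ.ncard + (G.induce (U ∪ W)).maxMatching + 1 := by
  obtain ⟨M, hM, hMcard⟩ := exists_isCrossMatching_ncard_eq_maxMatching
    (hUW.mono (Set.subset_insert u U) (Set.subset_insert w W)) hU hW
  obtain ⟨P, hP, hPcard⟩ := exists_pairwise_internallyDisjoint_ncard_eq
    (fun v => (hu v).2) (fun v => (hw v).2) hUW huU hwW hM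
  refine IsGreatest.csSup_eq ⟨⟨P, hMcard ▸ hPcard, hP⟩, ?_⟩
  rintro _ ⟨Q, rfl, hQ⟩
  exact ncard_le_of_pairwise_internallyDisjoint
    (fun a ha h => (hu a).1 h (Set.mem_insert_of_mem u ha))
    (fun b hb h => (hw b).1 h (Set.mem_insert_of_mem w hb)) hW hUW huU hwW hQ

theorem adj_iff_notMem_insert_neighborSet_compl (v x : V) :
    G.Adj v x ↔ x ∉ insert v (Gᶜ.neighborSet v) := by
  simp only [Set.mem_insert_iff, mem_neighborSet, compl_adj, not_or]
  grind [G.ne_of_adj]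

theorem disjoint_insert_neighborSet_of_two_lt_dist (h : 2 < G.dist u w) :
    Disjoint (insert u (G.neighborSet u)) (insert w (G.neighborSet w)) := by
  refine Set.disjoint_left.mpr fun v hvu hvw => h.not_ge (ENat.toNat_le_of_le_natCast ?_)
  have huv : G.edist u v ≤ 1 := edist_le_one_iff_adj_or_eq.mpr (by grind [mem_neighborSet])
  have hvw : G.edist v w ≤ 1 :=
    edist_le_one_iff_adj_or_eq.mpr (by grind [mem_neighborSet, G.adj_comm])
  calc G.edist u w ≤ G.edist u v + G.edist v w := G.edist_triangle
    _ ≤ 1 + 1 := add_le_add huv hvw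
    _ = (2 : ℕ) := rfl

end SimpleGraph

theorem stmt_18_general {V : Type*} [Fintype V] (G : SimpleGraph V)
    (d : ℕ) (hd : 3 ≤ d)
    (u w : V) (hu : (Gᶜ).IsClique ((Gᶜ).neighborSet u))
    (hw : (Gᶜ).IsClique ((Gᶜ).neighborSet w))
    (hdist : (Gᶜ).dist u w = d) :
    G.localConnectivity u w =
      (((Gᶜ).neighborSet u ∪ (Gᶜ).neighborSet w ∪ {u, w})ᶜ : Set V).ncard +
        (G.induce ((Gᶜ).neighborSet u ∪ (Gᶜ).neighborSet w)).maxMatching + 1 :=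
  localConnectivity_eq_ncard_add_maxMatching_add_one
    (adj_iff_notMem_insert_neighborSet_compl u) (adj_iff_notMem_insert_neighborSet_compl w)
    (G.isClique_compl.mp hu) (G.isClique_compl.mp hw)
    (disjoint_insert_neighborSet_of_two_lt_dist (hdist ▸ hd)) Gᶜ.notMem_neighborSet_self
    Gᶜ.notMem_neighborSet_self

/-- Let `G` be a co-chordal graph whose complement is connected with diameter `d ≥ 3`,
let `u`, `w` be simplicial vertices of the complement at distance `d`, let
`U = N_{Ḡ}(u)`, `W = N_{Ḡ}(w)`, `X = V(G) \ (U ∪ W ∪ {u,w})`, and let `m` be the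
maximum size of a matching in `G[U ∪ W]`. Then `κ_G(u,w) = |X| + m + 1`. -/
theorem stmt_18 {V : Type*} [Fintype V] (G : SimpleGraph V)
    (hchordal : (Gᶜ).IsChordal) (hconn : (Gᶜ).Connected)
    (d : ℕ) (hd : 3 ≤ d) (hdiam : (Gᶜ).ediam = (d : ℕ∞))
    (u w : V) (hu : (Gᶜ).IsClique ((Gᶜ).neighborSet u))
    (hw : (Gᶜ).IsClique ((Gᶜ).neighborSet w))
    (hdist : (Gᶜ).dist u w = d) :
    G.localConnectivity u w =
      (((Gᶜ).neighborSet u ∪ (Gᶜ).neighborSet w ∪ {u, w})ᶜ : Set V).ncard +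
        (G.induce ((Gᶜ).neighborSet u ∪ (Gᶜ).neighborSet w)).maxMatching + 1 :=
  stmt_18_general G d hd u w hu hw hdist
end
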